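/- arXiv:1001.4110 — 7 statements merged into one kernel-verified Lean document; each statement's English description precedes it below -/
import Mathlib

section
/- Theorem 1 (Exact recovery of sparse vectors). Let ε > 0 and suppose G is a (c,d)-regular (⌊2k/(1+2ε)+1⌋, 1/2+ε)-expander. Let x ∈ ℝ₊ⁿ have at most k nonzero entries and run the message-passing algorithm on y = Ax. Let T be the least nonnegative integer with (1−2ε)^T · k < 1 (so T = O(log k)). Then for every s ≥ 2T, the estimate satisfies x̂_i^{s} = x_i for all i ∈ X. -/
open Finset

namespace MP

/-- Neighborhood of a left vertex `i ∈ X`: the measurements involving `i`. -/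
def nhdX {n m : ℕ} (A : Fin m → Fin n → Bool) (i : Fin n) : Finset (Fin m) :=
  Finset.univ.filter (fun j => A j i = true)

/-- Neighborhood of a right vertex `j ∈ Y`. -/
def nhdY {n m : ℕ} (A : Fin m → Fin n → Bool) (j : Fin m) : Finset (Fin n) :=
  Finset.univ.filter (fun i => A j i = true)

/-- `Γ(S)`, the set of neighbors of `S ⊆ X`. -/
def Gam {n m : ℕ} (A : Fin m → Fin n → Bool) (S : Finset (Fin n)) : Finset (Fin m) :=
  S.biUnion (nhdX A)

/-- The measurement vector `y = A x`. -/
noncomputable def yvec {n m : ℕ} (A : Fin m → Fin n → Bool) (x : Fin n → ℝ) (j : Fin m) : ℝ :=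
  ∑ i ∈ nhdY A j, x i

/-- Message from measurement `j` to variable `i`, given current variable messages `z`:
`y_j - ∑_{k ∈ N_y(j) \ {i}} z_k`. -/
noncomputable def msgY {n m : ℕ} (A : Fin m → Fin n → Bool) (x z : Fin n → ℝ)
    (j : Fin m) (i : Fin n) : ℝ :=
  yvec A x j - ∑ k ∈ (nhdY A j).erase i, z k

/-- The algorithm's estimate `x̂^s` (equal to the variable-to-check message `m_{i→j}^s`,
which does not depend on `j`).  At odd times it is the min of incoming check messages;
at even times `s+1` it is `max(0, max of incoming check messages)`. -/
noncomputable def xhat {n m : ℕ} (A : Fin m → Fin n → Bool) (x : Fin n → ℝ) :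
    ℕ → Fin n → ℝ
  | 0 => fun _ => 0
  | s + 1 => fun i =>
      if Even (s + 1) then
        max 0 (sSup ((fun l => msgY A x (xhat A x s) l i) '' (↑(nhdX A i) : Set (Fin m))))
      else
        sInf ((fun l => msgY A x (xhat A x s) l i) '' (↑(nhdX A i) : Set (Fin m)))

/-- The variable-to-check message `m_{i→j}^s` (independent of `j`). -/
noncomputable def mXY {n m : ℕ} (A : Fin m → Fin n → Bool) (x : Fin n → ℝ)
    (s : ℕ) (i : Fin n) (_j : Fin m) : ℝ := xhat A x s i

/-- The check-to-variable message `m_{j→i}^s`. -/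
noncomputable def mYX {n m : ℕ} (A : Fin m → Fin n → Bool) (x : Fin n → ℝ)
    (s : ℕ) (j : Fin m) (i : Fin n) : ℝ := msgY A x (xhat A x s) j i

/-- `G` is `(c,d)`-regular. -/
def IsRegular {n m : ℕ} (A : Fin m → Fin n → Bool) (c d : ℕ) : Prop :=
  (∀ i, (nhdX A i).card = c) ∧ (∀ j, (nhdY A j).card = d)

/-- `G` is a `(kk, α)`-expander (w.r.t. left degree `c`). -/
def IsExpander {n m : ℕ} (A : Fin m → Fin n → Bool) (c kk : ℕ) (α : ℝ) : Prop :=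
  ∀ S : Finset (Fin n), S.card ≤ kk → α * c * S.card ≤ ((Gam A S).card : ℝ)

/-- ℓ¹ norm on `ℝⁿ`. -/
noncomputable def l1 {n : ℕ} (u : Fin n → ℝ) : ℝ := ∑ i, |u i|

/-- `z` has at most `k` nonzero entries. -/
def IsKSparse {n : ℕ} (k : ℕ) (z : Fin n → ℝ) : Prop :=
  (Finset.univ.filter (fun i => z i ≠ 0)).card ≤ k

/-- `xk` is a best `k`-sparse nonnegative approximation of `x` in ℓ¹. -/
def BestKSparse {n : ℕ} (k : ℕ) (x xk : Fin n → ℝ) : Prop :=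
  (∀ i, 0 ≤ xk i) ∧ IsKSparse k xk ∧
    ∀ z : Fin n → ℝ, (∀ i, 0 ≤ z i) → IsKSparse k z →
      l1 (fun i => x i - xk i) ≤ l1 (fun i => x i - z i)


end MP

namespace MPP
open MP

variable {n m : ℕ} {A : Fin m → Fin n → Bool} {x : Fin n → ℝ}

lemma mem_nhdX {i : Fin n} {j : Fin m} : j ∈ nhdX A i ↔ A j i = true := by
  simp [nhdX]

lemma mem_nhdY {i : Fin n} {j : Fin m} : i ∈ nhdY A j ↔ A j i = true := by
  simp [nhdY]

lemma nhdX_nhdY {i : Fin n} {j : Fin m} : j ∈ nhdX A i ↔ i ∈ nhdY A j := by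
  simp [mem_nhdX, mem_nhdY]

lemma mem_Gam {S : Finset (Fin n)} {j : Fin m} :
    j ∈ Gam A S ↔ ∃ i ∈ S, j ∈ nhdX A i := by simp [Gam]

lemma xhat_odd (t : ℕ) (i : Fin n) (h : (nhdX A i).Nonempty) :
    xhat A x (2*t+1) i
      = (nhdX A i).inf' h (fun l => msgY A x (xhat A x (2*t)) l i) := by
  have he : ¬ Even (2*t+1) := by simp [Nat.even_add_one]
  show xhat A x ((2*t)+1) i = _
  rw [xhat]
  simp only [if_neg he]
  rw [Finset.inf'_eq_csInf_image]

lemma xhat_even (t : ℕ) (i : Fin n) (h : (nhdX A i).Nonempty) :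
    xhat A x (2*t+2) i
      = max 0 ((nhdX A i).sup' h (fun l => msgY A x (xhat A x (2*t+1)) l i)) := by
  have he : Even (2*t+1+1) := by simp [Nat.even_add_one]
  show xhat A x ((2*t+1)+1) i = _
  rw [xhat]
  simp only [if_pos he]
  rw [Finset.sup'_eq_csSup_image]

lemma msg_eq_add {z : Fin n → ℝ} {i : Fin n} {j : Fin m} (hj : i ∈ nhdY A j) :
    msgY A x z j i = x i + ∑ k ∈ (nhdY A j).erase i, (x k - z k) := by
  unfold msgY yvec
  rw [← Finset.add_sum_erase _ x hj, Finset.sum_sub_distrib]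
  ring

lemma msg_le (hz : ∀ l, x l ≤ z l) {i : Fin n} {j : Fin m} (hj : j ∈ nhdX A i) :
    msgY A x z j i ≤ x i := by
  rw [msg_eq_add (nhdX_nhdY.mp hj)]
  have : ∑ k ∈ (nhdY A j).erase i, (x k - z k) ≤ 0 :=
    Finset.sum_nonpos (fun k _ => by linarith [hz k])
  linarith

lemma msg_ge (hz : ∀ l, z l ≤ x l) {i : Fin n} {j : Fin m} (hj : j ∈ nhdX A i) :
    x i ≤ msgY A x z j i := by
  rw [msg_eq_add (nhdX_nhdY.mp hj)]
  have : (0:ℝ) ≤ ∑ k ∈ (nhdY A j).erase i, (x k - z k) :=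
    Finset.sum_nonneg (fun k _ => by linarith [hz k])
  linarith

lemma msg_eq_x {z : Fin n → ℝ} {i : Fin n} {j : Fin m} (hj : j ∈ nhdX A i)
    (hz : ∀ l ∈ (nhdY A j).erase i, z l = x l) : msgY A x z j i = x i := by
  rw [msg_eq_add (nhdX_nhdY.mp hj)]
  have : ∑ k ∈ (nhdY A j).erase i, (x k - z k) = 0 :=
    Finset.sum_eq_zero (fun k hk => by rw [hz k hk]; ring)
  linarith

lemma msg_mono {z1 z2 : Fin n → ℝ} (hz : ∀ l, z1 l ≤ z2 l) (j : Fin m) (i : Fin n) :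
    msgY A x z2 j i ≤ msgY A x z1 j i := by
  unfold msgY
  have : ∑ k ∈ (nhdY A j).erase i, z1 k ≤ ∑ k ∈ (nhdY A j).erase i, z2 k :=
    Finset.sum_le_sum (fun k _ => hz k)
  linarith

section withreg
variable {c d : ℕ} (hreg : IsRegular A c d) (hc : 0 < c)

lemma nhdX_ne (hreg : ∀ i, (nhdX A i).card = c) (hc : 0 < c) (i : Fin n) :
    (nhdX A i).Nonempty := Finset.card_pos.mp (by rw [hreg i]; exact hc)

end withreg

/-- joint bounds -/
lemma bounds (hX : ∀ i : Fin n, (nhdX A i).Nonempty) (hx : ∀ i, 0 ≤ x i) :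
    ∀ t : ℕ, (∀ i, 0 ≤ xhat A x (2*t) i ∧ xhat A x (2*t) i ≤ x i)
      ∧ (∀ i, x i ≤ xhat A x (2*t+1) i) := by
  intro t
  induction t with
  | zero =>
    constructor
    · intro i; exact ⟨le_refl 0, hx i⟩
    · intro i
      rw [xhat_odd 0 i (hX i)]
      exact Finset.le_inf' _ _ (fun j hj => msg_ge (fun l => hx l) hj)
  | succ t ih =>
    have heven : ∀ i, 0 ≤ xhat A x (2*(t+1)) i ∧ xhat A x (2*(t+1)) i ≤ x i := by
      intro i
      have h2 : 2*(t+1) = 2*t+2 := by ring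
      rw [h2, xhat_even t i (hX i)]
      refine ⟨le_max_left _ _, ?_⟩
      refine max_le (hx i) ?_
      exact Finset.sup'_le _ _ (fun j hj => msg_le ih.2 hj)
    refine ⟨heven, ?_⟩
    intro i
    rw [xhat_odd (t+1) i (hX i)]
    exact Finset.le_inf' _ _ (fun j hj => msg_ge (fun l => (heven l).2) hj)


lemma inf'_mono_fun' {β : Type*} {s : Finset β} (hs : s.Nonempty) {f g : β → ℝ}
    (h : ∀ b ∈ s, f b ≤ g b) : s.inf' hs f ≤ s.inf' hs g :=
  Finset.le_inf' _ _ (fun b hb => (Finset.inf'_le _ hb).trans (h b hb))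

lemma mono (hX : ∀ i : Fin n, (nhdX A i).Nonempty) (hx : ∀ i, 0 ≤ x i) :
    ∀ t : ℕ, (∀ i, xhat A x (2*t) i ≤ xhat A x (2*t+2) i)
      ∧ (∀ i, xhat A x (2*t+3) i ≤ xhat A x (2*t+1) i) := by
  have key : ∀ t : ℕ, (∀ i, xhat A x (2*t) i ≤ xhat A x (2*t+2) i) →
      (∀ i, xhat A x (2*t+3) i ≤ xhat A x (2*t+1) i) := by
    intro t h i
    rw [show 2*t+3 = 2*(t+1)+1 from by ring, xhat_odd (t+1) i (hX i),
      xhat_odd t i (hX i)]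
    refine inf'_mono_fun' _ (fun j hj => ?_)
    exact msg_mono (fun l => by simpa [show 2*(t+1) = 2*t+2 from by ring] using h l) j i
  have keyE : ∀ t : ℕ, (∀ i, xhat A x (2*t+3) i ≤ xhat A x (2*t+1) i) →
      (∀ i, xhat A x (2*(t+1)) i ≤ xhat A x (2*(t+1)+2) i) := by
    intro t h i
    rw [show 2*(t+1) = 2*t+2 from by ring, show 2*t+2+2 = 2*(t+1)+2 from by ring,
      xhat_even t i (hX i), xhat_even (t+1) i (hX i)]
    refine max_le_max (le_refl 0) ?_
    refine Finset.sup'_mono_fun (fun j hj => ?_)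
    exact msg_mono (fun l => by simpa [show 2*(t+1)+1 = 2*t+3 from by ring] using h l) j i
  intro t
  induction t with
  | zero =>
    have h0 : ∀ i, xhat A x 0 i ≤ xhat A x 2 i := by
      intro i
      have := ((bounds hX hx 1).1 i).1
      simpa [xhat] using this
    exact ⟨h0, key 0 h0⟩
  | succ t ih =>
    have hE := keyE t ih.2
    exact ⟨hE, key (t+1) hE⟩

variable (A x) in
noncomputable def Eset (t : ℕ) : Finset (Fin n) :=
  Finset.univ.filter (fun i => xhat A x (2*t) i ≠ x i)

variable (A x) in
noncomputable def Oset (t : ℕ) : Finset (Fin n) :=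
  Finset.univ.filter (fun i => xhat A x (2*t+1) i ≠ x i)

variable (A x) in
noncomputable def Sset (t : ℕ) : Finset (Fin n) := Eset A x t ∪ Oset A x t

lemma mem_Eset {t : ℕ} {i : Fin n} : i ∈ Eset A x t ↔ xhat A x (2*t) i ≠ x i := by
  simp [Eset]

lemma mem_Oset {t : ℕ} {i : Fin n} : i ∈ Oset A x t ↔ xhat A x (2*t+1) i ≠ x i := by
  simp [Oset]

section props
variable (hX : ∀ i : Fin n, (nhdX A i).Nonempty) (hx : ∀ i, 0 ≤ x i)
include hX hx

lemma Eset_succ_subset (t : ℕ) : Eset A x (t+1) ⊆ Eset A x t := by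
  intro i hi
  rw [mem_Eset] at hi ⊢
  intro h
  apply hi
  have h1 : xhat A x (2*(t+1)) i ≤ x i := ((bounds hX hx (t+1)).1 i).2
  have h2 : xhat A x (2*t) i ≤ xhat A x (2*t+2) i := (mono hX hx t).1 i
  rw [h] at h2
  rw [show 2*(t+1) = 2*t+2 from by ring] at h1 ⊢
  linarith

lemma Oset_succ_subset (t : ℕ) : Oset A x (t+1) ⊆ Oset A x t := by
  intro i hi
  rw [mem_Oset] at hi ⊢
  intro h
  apply hi
  have h1 : x i ≤ xhat A x (2*(t+1)+1) i := (bounds hX hx (t+1)).2 i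
  have h2 : xhat A x (2*t+3) i ≤ xhat A x (2*t+1) i := (mono hX hx t).2 i
  rw [h] at h2
  rw [show 2*(t+1)+1 = 2*t+3 from by ring] at h1 ⊢
  linarith

lemma odd_wrong {t : ℕ} {i : Fin n} (hi : i ∈ Oset A x t) :
    ∀ j ∈ nhdX A i, ∃ k ∈ (nhdY A j).erase i, k ∈ Eset A x t := by
  intro j hj
  by_contra hcon
  push_neg at hcon
  have hall : ∀ k ∈ (nhdY A j).erase i, xhat A x (2*t) k = x k := by
    intro k hk
    have := hcon k hk
    rw [mem_Eset] at this
    push_neg at this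
    exact this
  have hmsg : msgY A x (xhat A x (2*t)) j i = x i := msg_eq_x hj hall
  rw [mem_Oset] at hi
  apply hi
  have hle : xhat A x (2*t+1) i ≤ x i := by
    rw [xhat_odd t i (hX i)]
    rw [← hmsg]
    exact Finset.inf'_le _ hj
  have hge : x i ≤ xhat A x (2*t+1) i := (bounds hX hx t).2 i
  linarith

lemma even_wrong {t : ℕ} {i : Fin n} (hi : i ∈ Eset A x (t+1)) :
    ∀ j ∈ nhdX A i, ∃ k ∈ (nhdY A j).erase i, k ∈ Oset A x t := by
  intro j hj
  by_contra hcon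
  push_neg at hcon
  have hall : ∀ k ∈ (nhdY A j).erase i, xhat A x (2*t+1) k = x k := by
    intro k hk
    have := hcon k hk
    rw [mem_Oset] at this
    push_neg at this
    exact this
  have hmsg : msgY A x (xhat A x (2*t+1)) j i = x i := msg_eq_x hj hall
  rw [mem_Eset] at hi
  apply hi
  have hge : x i ≤ xhat A x (2*(t+1)) i := by
    rw [show 2*(t+1) = 2*t+2 from by ring, xhat_even t i (hX i)]
    refine le_trans ?_ (le_max_right _ _)
    rw [← hmsg]
    exact Finset.le_sup' (fun l => msgY A x (xhat A x (2*t+1)) l i) hj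
  have hle : xhat A x (2*(t+1)) i ≤ x i := ((bounds hX hx (t+1)).1 i).2
  linarith

lemma Eset_subset_supp (t : ℕ) :
    Eset A x t ⊆ Finset.univ.filter (fun i => x i ≠ 0) := by
  intro i hi
  rw [mem_Eset] at hi
  simp only [Finset.mem_filter, Finset.mem_univ, true_and]
  intro h0
  apply hi
  have h1 : 0 ≤ xhat A x (2*t) i := ((bounds hX hx t).1 i).1
  have h2 : xhat A x (2*t) i ≤ x i := ((bounds hX hx t).1 i).2
  rw [h0] at h2 ⊢
  linarith

end props

lemma Gam_card_le {c : ℕ} (hreg1 : ∀ i, (nhdX A i).card = c) (S : Finset (Fin n)) :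
    (Gam A S).card ≤ c * S.card := by
  calc (Gam A S).card ≤ ∑ i ∈ S, (nhdX A i).card := Finset.card_biUnion_le
    _ = ∑ i ∈ S, c := by simp [hreg1]
    _ = c * S.card := by rw [Finset.sum_const, smul_eq_mul, mul_comm]

lemma inter_card_eq (S : Finset (Fin n)) (j : Fin m) :
    (nhdY A j ∩ S).card = ∑ i ∈ S, (if A j i = true then 1 else 0) := by
  rw [show nhdY A j ∩ S = S.filter (fun i => A j i = true) from by
    ext i; simp [nhdY, Finset.mem_filter, and_comm]]
  rw [Finset.card_filter]

lemma edge_count {c : ℕ} (hreg1 : ∀ i, (nhdX A i).card = c) (S : Finset (Fin n)) :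
    ∑ j : Fin m, (nhdY A j ∩ S).card = c * S.card := by
  have : ∀ j : Fin m, (nhdY A j ∩ S).card = ∑ i ∈ S, (if A j i = true then 1 else 0) :=
    inter_card_eq S
  rw [Finset.sum_congr rfl (fun j _ => this j), Finset.sum_comm]
  have : ∀ i : Fin n, ∑ j : Fin m, (if A j i = true then 1 else 0) = c := by
    intro i
    rw [← Finset.card_filter]
    exact hreg1 i
  rw [Finset.sum_congr rfl (fun i _ => this i), Finset.sum_const, smul_eq_mul, mul_comm]

lemma mem_Gam_inter {S : Finset (Fin n)} {j : Fin m} (hj : j ∈ Gam A S) :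
    1 ≤ (nhdY A j ∩ S).card := by
  rw [mem_Gam] at hj
  obtain ⟨i, hiS, hij⟩ := hj
  refine Finset.card_pos.mpr ⟨i, ?_⟩
  rw [Finset.mem_inter]
  exact ⟨nhdX_nhdY.mp hij, hiS⟩

variable (A) in
noncomputable def Dset (S : Finset (Fin n)) : Finset (Fin m) :=
  (Gam A S).filter (fun j => 2 ≤ (nhdY A j ∩ S).card)

lemma Gam_add_Dset_le {c : ℕ} (hreg1 : ∀ i, (nhdX A i).card = c) (S : Finset (Fin n)) :
    (Gam A S).card + (Dset A S).card ≤ c * S.card := by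
  have h1 : ∑ j ∈ Gam A S, (nhdY A j ∩ S).card ≤ ∑ j : Fin m, (nhdY A j ∩ S).card :=
    Finset.sum_le_sum_of_subset (Finset.subset_univ _)
  have h2 : ∑ j ∈ Gam A S, (nhdY A j ∩ S).card
      = ∑ j ∈ Dset A S, (nhdY A j ∩ S).card
        + ∑ j ∈ (Gam A S).filter (fun j => ¬ 2 ≤ (nhdY A j ∩ S).card), (nhdY A j ∩ S).card := by
    rw [Dset, Finset.sum_filter_add_sum_filter_not]
  have h3 : (Dset A S).card * 2 ≤ ∑ j ∈ Dset A S, (nhdY A j ∩ S).card := by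
    have := Finset.card_nsmul_le_sum (Dset A S) (fun j => (nhdY A j ∩ S).card) 2
      (fun j hj => (Finset.mem_filter.mp hj).2)
    simpa [smul_eq_mul] using this
  have h4 : ((Gam A S).filter (fun j => ¬ 2 ≤ (nhdY A j ∩ S).card)).card * 1
      ≤ ∑ j ∈ (Gam A S).filter (fun j => ¬ 2 ≤ (nhdY A j ∩ S).card), (nhdY A j ∩ S).card := by
    have := Finset.card_nsmul_le_sum ((Gam A S).filter (fun j => ¬ 2 ≤ (nhdY A j ∩ S).card))
      (fun j => (nhdY A j ∩ S).card) 1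
      (fun j hj => mem_Gam_inter (Finset.mem_filter.mp hj).1)
    simpa [smul_eq_mul] using this
  have h5 : (Dset A S).card
      + ((Gam A S).filter (fun j => ¬ 2 ≤ (nhdY A j ∩ S).card)).card = (Gam A S).card := by
    rw [Dset]
    exact Finset.card_filter_add_card_filter_not _
  have := edge_count hreg1 S
  omega

section main
variable {c d k : ℕ} {ε : ℝ}

lemma eps_le_half (hn : 0 < n) (hc : 0 < c) (hreg1 : ∀ i, (nhdX A i).card = c)
    (hε : 0 < ε) (hk : 0 < k)
    (hexp : IsExpander A c (Nat.floor (2 * (k : ℝ) / (1 + 2 * ε) + 1)) (1 / 2 + ε)) :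
    ε ≤ 1/2 := by
  have i : Fin n := ⟨0, hn⟩
  have h1 : ({i} : Finset (Fin n)).card ≤ Nat.floor (2 * (k : ℝ) / (1 + 2 * ε) + 1) := by
    rw [Finset.card_singleton]
    apply Nat.le_floor
    have : (0:ℝ) ≤ 2 * (k : ℝ) / (1 + 2 * ε) := by positivity
    push_cast
    linarith
  have h2 := hexp {i} h1
  have h3 : Gam A {i} = nhdX A i := by simp [Gam]
  rw [h3, hreg1 i] at h2
  simp only [Finset.card_singleton, Nat.cast_one, mul_one] at h2
  have hc' : (0:ℝ) < c := by exact_mod_cast hc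
  nlinarith

variable (hn : 0 < n) (hc : 0 < c) (hk : 0 < k) (hε : 0 < ε)
  (hreg1 : ∀ i : Fin n, (nhdX A i).card = c)
  (hexp : IsExpander A c (Nat.floor (2 * (k : ℝ) / (1 + 2 * ε) + 1)) (1 / 2 + ε))
  (hx : ∀ i, 0 ≤ x i) (hsparse : IsKSparse k x)

lemma Gam_O_subset (hX : ∀ i : Fin n, (nhdX A i).Nonempty) (hx : ∀ i, 0 ≤ x i) (t : ℕ)
    {U : Finset (Fin n)} (hU : U ⊆ Sset A x t) (hEU : Eset A x t ⊆ U) :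
    Gam A U ⊆ Gam A (Eset A x t) := by
  intro j hj
  rw [mem_Gam] at hj ⊢
  obtain ⟨i, hiU, hij⟩ := hj
  by_cases hiE : i ∈ Eset A x t
  · exact ⟨i, hiE, hij⟩
  · have hiO : i ∈ Oset A x t := by
      have := hU hiU
      rw [Sset, Finset.mem_union] at this
      tauto
    obtain ⟨kk, hkk, hkE⟩ := odd_wrong hX hx hiO j hij
    exact ⟨kk, hkE, nhdX_nhdY.mpr (Finset.mem_of_mem_erase hkk)⟩

include hn hc hk hε hreg1 hexp hx hsparse in
lemma card_S_le (hX : ∀ i : Fin n, (nhdX A i).Nonempty) (t : ℕ) :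
    (1 + 2*ε) * ((Sset A x t).card : ℝ) ≤ 2 * k := by
  have hε2 : ε ≤ 1/2 := eps_le_half hn hc hreg1 hε hk hexp
  have hpos : (0:ℝ) < 1 + 2*ε := by linarith
  have hcR : (0:ℝ) < c := by exact_mod_cast hc
  set kk := Nat.floor (2 * (k : ℝ) / (1 + 2 * ε) + 1) with hkk_def
  have hEk : (Eset A x t).card ≤ k :=
    le_trans (Finset.card_le_card (Eset_subset_supp hX hx t)) hsparse
  have hGamE : ((Gam A (Eset A x t)).card : ℝ) ≤ c * k := by
    have h1 : (Gam A (Eset A x t)).card ≤ c * (Eset A x t).card := Gam_card_le hreg1 _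
    have h2 : c * (Eset A x t).card ≤ c * k := Nat.mul_le_mul_left c hEk
    exact_mod_cast le_trans h1 h2
  have hkkgt : 2 * (k:ℝ) / (1 + 2*ε) < kk := by
    have := Nat.lt_floor_add_one (2 * (k : ℝ) / (1 + 2 * ε) + 1)
    rw [hkk_def]
    have hfl : (Nat.floor (2 * (k : ℝ) / (1 + 2 * ε) + 1) : ℝ)
        = (Nat.floor (2 * (k : ℝ) / (1 + 2 * ε)) : ℝ) + 1 := by
      rw [Nat.floor_add_one (by positivity)]
      push_cast
      ring
    rw [hfl]
    have := Nat.floor_le (show (0:ℝ) ≤ 2 * (k : ℝ) / (1 + 2 * ε) by positivity)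
    nlinarith [Nat.lt_floor_add_one (2 * (k : ℝ) / (1 + 2 * ε))]
  have hkR : 2*(k:ℝ) = (2 * (k:ℝ) / (1 + 2*ε)) * (1+2*ε) := by
    field_simp
  -- Step 1 : (Sset A x t).card ≤ kk
  have hScard : (Sset A x t).card ≤ kk := by
    by_contra hcon
    push_neg at hcon
    have hEkk : (Eset A x t).card ≤ kk := by
      apply le_trans hEk
      apply Nat.le_floor
      have : (k:ℝ) ≤ 2*k/(1+2*ε) := by
        rw [le_div_iff₀ hpos]
        nlinarith
      linarith
    obtain ⟨U, hEU, hUS, hUcard⟩ := Finset.exists_subsuperset_card_eq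
      (Finset.subset_union_left : Eset A x t ⊆ Sset A x t) hEkk (le_of_lt hcon)
    have hGamU : Gam A U ⊆ Gam A (Eset A x t) := Gam_O_subset hX hx t hUS hEU
    have hexpU := hexp U (le_of_eq hUcard)
    rw [hUcard] at hexpU
    have hle : ((Gam A U).card : ℝ) ≤ c * k :=
      le_trans (by exact_mod_cast Finset.card_le_card hGamU) hGamE
    have h2 : 2*(k:ℝ) < kk*(1+2*ε) := by
      rw [hkR]
      exact mul_lt_mul_of_pos_right hkkgt hpos
    nlinarith [mul_lt_mul_of_pos_left h2 hcR]
  -- Step 2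
  have hexpS := hexp _ hScard
  have hle : ((Gam A (Sset A x t)).card : ℝ) ≤ c * k := by
    refine le_trans ?_ hGamE
    exact_mod_cast Finset.card_le_card
      (Gam_O_subset hX hx t (le_refl _) Finset.subset_union_left)
  nlinarith

include hn hc hk hε hreg1 hexp hx hsparse in
lemma contraction (hX : ∀ i : Fin n, (nhdX A i).Nonempty) (t : ℕ) :
    (1 + 2*ε) * ((Sset A x (t+1)).card : ℝ) ≤ (1 - 2*ε) * ((Sset A x t).card : ℝ) := by
  have hε2 : ε ≤ 1/2 := eps_le_half hn hc hreg1 hε hk hexp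
  have hpos : (0:ℝ) < 1 + 2*ε := by linarith
  have hcR : (0:ℝ) < c := by exact_mod_cast hc
  set kk := Nat.floor (2 * (k : ℝ) / (1 + 2 * ε) + 1) with hkk_def
  have hSkk : ∀ r : ℕ, (Sset A x r).card ≤ kk := by
    intro r
    have h1 := card_S_le hn hc hk hε hreg1 hexp hx hsparse hX r
    apply Nat.le_floor
    have : ((Sset A x r).card : ℝ) ≤ 2*k/(1+2*ε) := by
      rw [le_div_iff₀ hpos]
      nlinarith
    linarith
  -- Gam of S (t+1) lands in Dset of S t
  have hGamD : Gam A (Sset A x (t+1)) ⊆ Dset A (Sset A x t) := by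
    intro j hj
    rw [mem_Gam] at hj
    obtain ⟨i, hiS, hij⟩ := hj
    rw [Sset, Finset.mem_union] at hiS
    have key : ∃ i' l : Fin n, i' ≠ l ∧ i' ∈ nhdY A j ∩ Sset A x t ∧
        l ∈ nhdY A j ∩ Sset A x t := by
      rcases hiS with hiE | hiO
      · obtain ⟨l, hl, hlO⟩ := even_wrong hX hx hiE j hij
        refine ⟨i, l, (Finset.ne_of_mem_erase hl).symm.symm ∘ Eq.symm, ?_, ?_⟩
        · rw [Finset.mem_inter]
          exact ⟨nhdX_nhdY.mp hij,
            Finset.mem_union_left _ (Eset_succ_subset hX hx t hiE)⟩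
        · rw [Finset.mem_inter]
          exact ⟨Finset.mem_of_mem_erase hl, Finset.mem_union_right _ hlO⟩
      · obtain ⟨l, hl, hlE⟩ := odd_wrong hX hx hiO j hij
        refine ⟨i, l, ?_, ?_, ?_⟩
        · exact fun h => (Finset.ne_of_mem_erase hl) h.symm
        · rw [Finset.mem_inter]
          exact ⟨nhdX_nhdY.mp hij,
            Finset.mem_union_right _ (Oset_succ_subset hX hx t hiO)⟩
        · rw [Finset.mem_inter]
          exact ⟨Finset.mem_of_mem_erase hl,
            Finset.mem_union_left _ (Eset_succ_subset hX hx t hlE)⟩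
    obtain ⟨i', l, hne, hi', hl⟩ := key
    rw [Dset, Finset.mem_filter]
    constructor
    · rw [mem_Gam]
      exact ⟨i', (Finset.mem_inter.mp hi').2, nhdX_nhdY.mpr (Finset.mem_inter.mp hi').1⟩
    · exact Finset.one_lt_card.mpr ⟨i', hi', l, hl, hne⟩
  have h1 := hexp _ (hSkk (t+1))
  have h2 := hexp _ (hSkk t)
  have h3 : ((Gam A (Sset A x (t+1))).card : ℝ) ≤ ((Dset A (Sset A x t)).card : ℝ) := by
    exact_mod_cast Finset.card_le_card hGamD
  have h4 : ((Gam A (Sset A x t)).card : ℝ) + ((Dset A (Sset A x t)).card : ℝ)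
      ≤ c * ((Sset A x t).card : ℝ) := by
    exact_mod_cast Gam_add_Dset_le hreg1 (Sset A x t)
  -- (1/2+ε) c |S'| ≤ |D| ≤ c|S| - (1/2+ε)c|S|
  have h5 : (1/2+ε) * c * ((Sset A x (t+1)).card : ℝ)
      ≤ (1/2-ε) * c * ((Sset A x t).card : ℝ) := by linarith
  nlinarith [h5, hcR, (Nat.cast_nonneg (Sset A x (t+1)).card : (0:ℝ) ≤ _), (Nat.cast_nonneg (Sset A x t).card : (0:ℝ) ≤ _)]

lemma endgame_arith {ε : ℝ} {k T aT a0 : ℕ} (hε : 0 < ε) (hε2 : ε ≤ 1/2) (hk : 0 < k)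
    (hT1 : (1 - 2 * ε) ^ T * (k : ℝ) < 1) (haT : 1 ≤ aT) (ha0T : T + 1 ≤ a0)
    (hbound0 : (1+2*ε) * (a0 : ℝ) ≤ 2*k)
    (hpowT : (1+2*ε)^(T+1) * (aT : ℝ) ≤ (1-2*ε)^T * ((1+2*ε) * (a0 : ℝ))) : False := by
  have hpos : (0:ℝ) < 1 + 2*ε := by linarith
  have hneg : (0:ℝ) ≤ 1 - 2*ε := by linarith
  have hkR : (1:ℝ) ≤ (k:ℝ) := by exact_mod_cast hk
  have hW : (0:ℝ) ≤ (1-2*ε)^T := by positivity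
  have hTn : (0:ℝ) ≤ (T:ℝ) := Nat.cast_nonneg T
  have hchain : (1+2*ε)^(T+1) < 2 := by
    have h1 : (1+2*ε)^(T+1) * 1 ≤ (1+2*ε)^(T+1) * (aT : ℝ) := by
      have haR : (1:ℝ) ≤ (aT : ℝ) := by exact_mod_cast haT
      have hp : (0:ℝ) ≤ (1+2*ε)^(T+1) := by positivity
      nlinarith
    have h3 : (1-2*ε)^T * ((1+2*ε) * (a0 : ℝ)) ≤ (1-2*ε)^T * (2*k) :=
      mul_le_mul_of_nonneg_left hbound0 hW
    have h4 : (1-2*ε)^T * (2*(k:ℝ)) < 2 := by nlinarith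
    linarith
  have hP : (0:ℝ) < (1+2*ε)^T := by positivity
  have hPP : (1+2*ε)^T * (1+2*ε) < 2 := by
    rw [← pow_succ]
    exact hchain
  have hB1 : 1 + ((T:ℝ)+1) * (2*ε) ≤ (1+2*ε)^(T+1) := by
    have := one_add_mul_le_pow (show (-2:ℝ) ≤ 2*ε by linarith) (T+1)
    push_cast at this
    linarith
  have hTε : ((T:ℝ)+1) * (2*ε) < 1 := by linarith
  have hB2 : 1 + (T:ℝ) * (-(4*ε^2)) ≤ (1-2*ε)^T * (1+2*ε)^T := by
    have h := one_add_mul_le_pow (show (-2:ℝ) ≤ -(4*ε^2) by nlinarith) T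
    have heq : ((1:ℝ) + -(4*ε^2))^T = (1-2*ε)^T * (1+2*ε)^T := by
      rw [← mul_pow]
      ring_nf
    push_cast at h
    rw [heq] at h
    linarith
  have hW2 : (1:ℝ)/2 ≤ (1-2*ε)^T := by
    set W := (1-2*ε)^T with hWdef
    set P := (1+2*ε)^T with hPdef
    have e1 : W * (P * (1+2*ε)) ≤ W * 2 := mul_le_mul_of_nonneg_left hPP.le hW
    have e2 : (1 - (T:ℝ)*(4*ε^2)) * (1+2*ε) ≤ (W*P) * (1+2*ε) :=
      mul_le_mul_of_nonneg_right (by linarith [hB2]) (le_of_lt hpos)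
    have e3 : (W*P)*(1+2*ε) = W*(P*(1+2*ε)) := by ring
    have p1 : 2*ε*(T:ℝ) ≤ 1-2*ε := by nlinarith [hTε]
    have p2 : (2*ε*(T:ℝ))*(1+2*ε) ≤ (1-2*ε)*(1+2*ε) :=
      mul_le_mul_of_nonneg_right p1 hpos.le
    have hprod : 2*ε*(T:ℝ)*(1+2*ε) ≤ 1 := by nlinarith [p2, sq_nonneg ε]
    have e4 : (1:ℝ) ≤ (1 - (T:ℝ)*(4*ε^2)) * (1+2*ε) := by
      have h4 : 2*ε*(2*ε*(T:ℝ)*(1+2*ε)) ≤ 2*ε*1 :=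
        mul_le_mul_of_nonneg_left hprod (by linarith)
      linarith [h4]
    linarith
  have hk1 : k = 1 := by
    have h5 : (k:ℝ)*(1/2) ≤ (k:ℝ)*((1-2*ε)^T) :=
      mul_le_mul_of_nonneg_left hW2 (by positivity)
    have : (k:ℝ) < 2 := by linarith [h5, hT1]
    have : k < 2 := by exact_mod_cast this
    omega
  have hT0 : T = 0 := by
    have h3 : ((T:ℝ)+1) ≤ (a0 : ℝ) := by exact_mod_cast ha0T
    have h1 : (1+2*ε) * ((T:ℝ)+1) ≤ 2 := by
      rw [hk1] at hbound0
      push_cast at hbound0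
      linarith [mul_le_mul_of_nonneg_left h3 hpos.le]
    have h2 : ((T:ℝ)+1) < 2 := by
      by_contra hcon
      push_neg at hcon
      linarith [mul_le_mul_of_nonneg_left hcon hpos.le]
    have : (T:ℝ) < 1 := by linarith
    exact_mod_cast Nat.lt_one_iff.mp (by exact_mod_cast this)
  rw [hT0, hk1] at hT1
  norm_num at hT1

include hn hc hk hε hreg1 hexp hx hsparse in
lemma Sset_T_empty (hX : ∀ i : Fin n, (nhdX A i).Nonempty)
    (T : ℕ) (hT1 : (1 - 2 * ε) ^ T * (k : ℝ) < 1) :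
    Sset A x T = ∅ := by
  have hε2 : ε ≤ 1/2 := eps_le_half hn hc hreg1 hε hk hexp
  have hpos : (0:ℝ) < 1 + 2*ε := by linarith
  have hneg : (0:ℝ) ≤ 1 - 2*ε := by linarith
  by_contra hne
  have haT : 1 ≤ (Sset A x T).card := Finset.card_pos.mpr (Finset.nonempty_of_ne_empty hne)
  set a : ℕ → ℕ := fun t => (Sset A x t).card with ha_def
  have hcontr : ∀ t, (1+2*ε) * (a (t+1) : ℝ) ≤ (1-2*ε) * (a t : ℝ) :=
    fun t => contraction hn hc hk hε hreg1 hexp hx hsparse hX t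
  have hbound : ∀ t, (1+2*ε) * (a t : ℝ) ≤ 2*k :=
    fun t => card_S_le hn hc hk hε hreg1 hexp hx hsparse hX t
  have hnest : ∀ t, a (t+1) ≤ a t := by
    intro t
    exact Finset.card_le_card
      (Finset.union_subset_union (Eset_succ_subset hX hx t) (Oset_succ_subset hX hx t))
  have hante : ∀ t₁ t₂, t₁ ≤ t₂ → a t₂ ≤ a t₁ := by
    intro t₁ t₂ h
    induction t₂, h using Nat.le_induction with
    | base => exact le_refl _
    | succ t₂ h ih => exact le_trans (hnest t₂) ih
  have hge1 : ∀ t ≤ T, 1 ≤ a t := fun t ht => le_trans haT (hante t T ht)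
  have hstep : ∀ t < T, a (t+1) + 1 ≤ a t := by
    intro t ht
    have h1 : 1 ≤ a (t+1) := hge1 (t+1) ht
    have h2 := hcontr t
    have h1R : (1:ℝ) ≤ (a (t+1) : ℝ) := by exact_mod_cast h1
    have h3 : (a (t+1) : ℝ) < (a t : ℝ) := by
      by_contra hcon
      push_neg at hcon
      have h4 : (1-2*ε) * (a t : ℝ) ≤ (1-2*ε) * (a (t+1) : ℝ) :=
        mul_le_mul_of_nonneg_left hcon hneg
      nlinarith [mul_le_mul_of_nonneg_left h1R (le_of_lt hε)]
    exact_mod_cast Nat.succ_le_of_lt (by exact_mod_cast h3)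
  have ha0 : ∀ j ≤ T, j + a T ≤ a (T - j) := by
    intro j hj
    induction j with
    | zero => simp
    | succ j ih =>
      have hj' : j ≤ T := le_of_lt hj
      have h1 := ih hj'
      have h2 : T - j = (T - (j+1)) + 1 := by omega
      have h3 : T - (j+1) < T := by omega
      have := hstep (T - (j+1)) h3
      rw [← h2] at this
      omega
  have haT0 : T + 1 ≤ a 0 := by
    have h := ha0 T (le_refl T)
    rw [Nat.sub_self] at h
    have haT' : 1 ≤ a T := haT
    omega
  have hpow : ∀ t, (1+2*ε)^(t+1) * (a t : ℝ) ≤ (1-2*ε)^t * ((1+2*ε) * (a 0 : ℝ)) := by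
    intro t
    induction t with
    | zero => simp [pow_succ]
    | succ t ih =>
      have hp : (0:ℝ) ≤ (1+2*ε)^(t+1) := by positivity
      calc (1+2*ε)^(t+2) * (a (t+1) : ℝ)
          = (1+2*ε)^(t+1) * ((1+2*ε) * (a (t+1) : ℝ)) := by ring
        _ ≤ (1+2*ε)^(t+1) * ((1-2*ε) * (a t : ℝ)) :=
            mul_le_mul_of_nonneg_left (hcontr t) hp
        _ = (1-2*ε) * ((1+2*ε)^(t+1) * (a t : ℝ)) := by ring
        _ ≤ (1-2*ε) * ((1-2*ε)^t * ((1+2*ε) * (a 0 : ℝ))) :=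
            mul_le_mul_of_nonneg_left ih hneg
        _ = (1-2*ε)^(t+1) * ((1+2*ε) * (a 0 : ℝ)) := by ring
  exact endgame_arith hε hε2 hk hT1 haT haT0 (hbound 0) (hpow T)

end main

end MPP


open MP Finset
open MPP

/-- **Theorem 1 (Exact recovery of sparse vectors).**
If `G` is a `(c,d)`-regular `(⌊2k/(1+2ε)+1⌋, 1/2+ε)`-expander, `x ∈ ℝ₊ⁿ` is `k`-sparse,
and `T` is the least nonnegative integer with `(1-2ε)^T·k < 1`, then `x̂^s = x`
for every `s ≥ 2T`. -/
theorem exact_recovery_of_sparse (n m c d k : ℕ)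
    (hn : 0 < n) (hm : 0 < m) (hc : 0 < c) (hd : 0 < d) (hk : 0 < k)
    (A : Fin m → Fin n → Bool) (ε : ℝ) (hε : 0 < ε)
    (hreg : IsRegular A c d)
    (hexp : IsExpander A c (Nat.floor (2 * (k : ℝ) / (1 + 2 * ε) + 1)) (1 / 2 + ε))
    (x : Fin n → ℝ) (hx : ∀ i, 0 ≤ x i) (hsparse : IsKSparse k x)
    (T : ℕ) (hT1 : (1 - 2 * ε) ^ T * (k : ℝ) < 1)
    (hT2 : ∀ T' : ℕ, (1 - 2 * ε) ^ T' * (k : ℝ) < 1 → T ≤ T') :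
    ∀ s : ℕ, 2 * T ≤ s → ∀ i : Fin n, xhat A x s i = x i := by
  have hX : ∀ i : Fin n, (nhdX A i).Nonempty := nhdX_ne hreg.1 hc
  have hSE : Sset A x T = ∅ :=
    Sset_T_empty hn hc hk hε hreg.1 hexp hx hsparse hX T hT1
  have hSt : ∀ t, T ≤ t → Sset A x t = ∅ := by
    intro t ht
    induction t, ht using Nat.le_induction with
    | base => exact hSE
    | succ t ht ih =>
      have hsub : Sset A x (t+1) ⊆ Sset A x t :=
        Finset.union_subset_union (Eset_succ_subset hX hx t) (Oset_succ_subset hX hx t)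
      rw [ih] at hsub
      exact Finset.subset_empty.mp hsub
  intro s hs i
  rcases Nat.even_or_odd s with ⟨t, ht⟩ | ⟨t, ht⟩
  · have hst : s = 2*t := by omega
    have hTt : T ≤ t := by omega
    have hE : i ∉ Eset A x t := by
      intro hmem
      have h0 := hSt t hTt
      have : i ∈ (∅ : Finset (Fin n)) := by
        rw [← h0]
        exact Finset.mem_union_left _ hmem
      exact absurd this (Finset.notMem_empty i)
    rw [mem_Eset] at hE
    push_neg at hE
    rw [hst]
    exact hE
  · have hst : s = 2*t+1 := by omega
    have hTt : T ≤ t := by omega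
    have hO : i ∉ Oset A x t := by
      intro hmem
      have := hSt t hTt
      have : i ∈ (∅ : Finset (Fin n)) := by
        rw [← this]
        exact Finset.mem_union_right _ hmem
      exact absurd this (Finset.notMem_empty i)
    rw [mem_Oset] at hO
    push_neg at hO
    rw [hst]
    exact hO
end

section
/- Monotonicity of the messages. Suppose every i ∈ X has degree c ≥ 1 and every j ∈ Y has degree d ≥ 1, let x ∈ ℝ₊ⁿ and run the message-passing algorithm on y = Ax. Then for every edge (i,j) ∈ E and every t ≥ 0: m_{i→j}^{2t} ≤ m_{i→j}^{2t+2} ≤ x_i ≤ m_{i→j}^{2t+3} ≤ m_{i→j}^{2t+1}, and likewise m_{j→i}^{2t+1} ≤ m_{j→i}^{2t+3} ≤ x_i ≤ m_{j→i}^{2t+2} ≤ m_{j→i}^{2t}. Consequently x̂_i^{2t} ≤ x_i ≤ x̂_i^{2t+1} for all i ∈ X and t ≥ 0, and for every S ⊆ X the quantity Σ_{i∈S}(x_i − x̂_i^{2t}) is nonnegative and nonincreasing in t. -/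
open Finset

/-!
Write `y_j = x_i + ∑_{k ∈ N_y(j) ∖ {i}} x_k`. The check-to-variable message
`m_{j→i} = y_j - ∑_{k ≠ i} z_k` is antitone in the incoming estimates `z`, and it is `≥ x_i`
when `z ≤ x`, `≤ x_i` when `z ≥ x`. Hence one round `x̂^s ↦ x̂^{s+1}` is antitone and swaps
lower and upper bounds of `x`, so two rounds are monotone. Starting from `x̂^0 = 0 ≤ x̂^2`,
induction makes the even estimates increasing lower bounds and the odd ones decreasing upper
bounds.
-/

namespace MP

variable {n m : ℕ} {A : Fin m → Fin n → Bool} {x : Fin n → ℝ}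

lemma mem_nhdX {i : Fin n} {j : Fin m} : j ∈ nhdX A i ↔ A j i = true := by
  simp [nhdX]

lemma msgY_eq_add_sum_sub {i : Fin n} {j : Fin m} (h : A j i = true) (z : Fin n → ℝ) :
    msgY A x z j i = x i + ∑ k ∈ (nhdY A j).erase i, (x k - z k) := by
  have hi : i ∈ nhdY A j := by simp [nhdY, h]
  rw [msgY, yvec, ← add_sum_erase _ _ hi, sum_sub_distrib]
  ring

lemma msgY_antitone (j : Fin m) (i : Fin n) : Antitone fun z => msgY A x z j i :=
  fun _ _ hz => sub_le_sub_left (sum_le_sum fun k _ => hz k) _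

lemma msgY_le_of_le {i : Fin n} {j : Fin m} {z : Fin n → ℝ} (h : A j i = true) (hz : x ≤ z) :
    msgY A x z j i ≤ x i := by
  rw [msgY_eq_add_sum_sub h]
  linarith [sum_nonpos fun k (_ : k ∈ (nhdY A j).erase i) => sub_nonpos.2 (hz k)]

lemma le_msgY_of_le {i : Fin n} {j : Fin m} {z : Fin n → ℝ} (h : A j i = true) (hz : z ≤ x) :
    x i ≤ msgY A x z j i := by
  rw [msgY_eq_add_sum_sub h]
  linarith [sum_nonneg fun k (_ : k ∈ (nhdY A j).erase i) => sub_nonneg.2 (hz k)]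

lemma xhat_two_mul_add_one (hA : ∀ i, (nhdX A i).Nonempty) (t : ℕ) (i : Fin n) :
    xhat A x (2 * t + 1) i =
      (nhdX A i).inf' (hA i) fun l => msgY A x (xhat A x (2 * t)) l i := by
  rw [xhat, inf'_eq_csInf_image]
  simp

lemma xhat_two_mul_add_two (hA : ∀ i, (nhdX A i).Nonempty) (t : ℕ) (i : Fin n) :
    xhat A x (2 * t + 2) i =
      max 0 ((nhdX A i).sup' (hA i) fun l => msgY A x (xhat A x (2 * t + 1)) l i) := by
  rw [xhat, sup'_eq_csSup_image]
  simp [Nat.even_add_one]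

lemma xhat_two_mul_add_one_le_of_le (hA : ∀ i, (nhdX A i).Nonempty) {t t' : ℕ}
    (h : xhat A x (2 * t) ≤ xhat A x (2 * t')) :
    xhat A x (2 * t' + 1) ≤ xhat A x (2 * t + 1) := fun i => by
  rw [xhat_two_mul_add_one hA, xhat_two_mul_add_one hA]
  exact inf'_mono_fun fun l _ => msgY_antitone l i h

lemma xhat_two_mul_add_two_le_of_le (hA : ∀ i, (nhdX A i).Nonempty) {t t' : ℕ}
    (h : xhat A x (2 * t + 1) ≤ xhat A x (2 * t' + 1)) :
    xhat A x (2 * t' + 2) ≤ xhat A x (2 * t + 2) := fun i => by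
  rw [xhat_two_mul_add_two hA, xhat_two_mul_add_two hA]
  exact max_le_max le_rfl (sup'_mono_fun fun l _ => msgY_antitone l i h)

lemma le_xhat_two_mul_add_one (hA : ∀ i, (nhdX A i).Nonempty) {t : ℕ}
    (h : xhat A x (2 * t) ≤ x) :
    x ≤ xhat A x (2 * t + 1) := fun i => by
  rw [xhat_two_mul_add_one hA]
  exact le_inf' _ _ fun l hl => le_msgY_of_le (mem_nhdX.1 hl) h

lemma xhat_two_mul_add_two_le (hA : ∀ i, (nhdX A i).Nonempty) (hx : 0 ≤ x) {t : ℕ}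
    (h : x ≤ xhat A x (2 * t + 1)) :
    xhat A x (2 * t + 2) ≤ x := fun i => by
  rw [xhat_two_mul_add_two hA]
  exact max_le (hx i) (sup'_le _ _ fun l hl => msgY_le_of_le (mem_nhdX.1 hl) h)

lemma xhat_two_mul_le (hA : ∀ i, (nhdX A i).Nonempty) (hx : 0 ≤ x) (t : ℕ) :
    xhat A x (2 * t) ≤ x := by
  induction t with
  | zero => exact hx
  | succ t ih => exact xhat_two_mul_add_two_le hA hx (le_xhat_two_mul_add_one hA ih)

lemma xhat_two_mul_le_two_mul_add_two (hA : ∀ i, (nhdX A i).Nonempty) (t : ℕ) :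
    xhat A x (2 * t) ≤ xhat A x (2 * t + 2) := by
  induction t with
  | zero => exact fun i => (xhat_two_mul_add_two hA 0 i).symm ▸ le_max_left _ _
  | succ t ih =>
    exact xhat_two_mul_add_two_le_of_le hA (xhat_two_mul_add_one_le_of_le hA (t' := t + 1) ih)

end MP

open MP Finset

theorem message_monotonicity_general (n m c d : ℕ)
    (hc : 1 ≤ c)
    (A : Fin m → Fin n → Bool) (hreg : IsRegular A c d)
    (x : Fin n → ℝ) (hx : ∀ i, 0 ≤ x i) :
    (∀ (i : Fin n) (j : Fin m), A j i = true → ∀ t : ℕ,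
      mXY A x (2 * t) i j ≤ mXY A x (2 * t + 2) i j ∧
      mXY A x (2 * t + 2) i j ≤ x i ∧
      x i ≤ mXY A x (2 * t + 3) i j ∧
      mXY A x (2 * t + 3) i j ≤ mXY A x (2 * t + 1) i j ∧
      mYX A x (2 * t + 1) j i ≤ mYX A x (2 * t + 3) j i ∧
      mYX A x (2 * t + 3) j i ≤ x i ∧
      x i ≤ mYX A x (2 * t + 2) j i ∧
      mYX A x (2 * t + 2) j i ≤ mYX A x (2 * t) j i) ∧
    (∀ (i : Fin n) (t : ℕ), xhat A x (2 * t) i ≤ x i ∧ x i ≤ xhat A x (2 * t + 1) i) ∧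
    (∀ (S : Finset (Fin n)) (t : ℕ),
      0 ≤ ∑ i ∈ S, (x i - xhat A x (2 * t) i) ∧
      ∑ i ∈ S, (x i - xhat A x (2 * (t + 1)) i) ≤ ∑ i ∈ S, (x i - xhat A x (2 * t) i)) := by
  have hA : ∀ i, (nhdX A i).Nonempty := fun i => card_pos.1 (hreg.1 i ▸ hc)
  have hlo := xhat_two_mul_le hA hx
  have hup t := le_xhat_two_mul_add_one hA (hlo t)
  have hinc := xhat_two_mul_le_two_mul_add_two hA (x := x)
  have hdec t := xhat_two_mul_add_one_le_of_le hA (t' := t + 1) (hinc t)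
  refine ⟨fun i j hij t => ⟨hinc t i, hlo (t + 1) i, hup (t + 1) i, hdec t i,
      msgY_antitone j i (hdec t), msgY_le_of_le hij (hup (t + 1)),
      le_msgY_of_le hij (hlo (t + 1)), msgY_antitone j i (hinc t)⟩,
    fun i t => ⟨hlo t i, hup t i⟩,
    fun S t => ⟨sum_nonneg fun i _ => sub_nonneg.2 (hlo t i),
      sum_le_sum fun i _ => sub_le_sub_left (hinc t i) _⟩⟩

/-- **Monotonicity of the messages.** Even-time variable messages are nondecreasing lower
bounds on `x_i`, odd-time ones are nonincreasing upper bounds (and correspondingly for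
check-to-variable messages); hence `x̂^{2t} ≤ x ≤ x̂^{2t+1}` and the error
`∑_{i∈S}(x_i - x̂_i^{2t})` is nonnegative and nonincreasing in `t`. -/
theorem message_monotonicity (n m c d : ℕ)
    (hn : 0 < n) (hm : 0 < m) (hc : 1 ≤ c) (hd : 1 ≤ d)
    (A : Fin m → Fin n → Bool) (hreg : IsRegular A c d)
    (x : Fin n → ℝ) (hx : ∀ i, 0 ≤ x i) :
    (∀ (i : Fin n) (j : Fin m), A j i = true → ∀ t : ℕ,
      mXY A x (2 * t) i j ≤ mXY A x (2 * t + 2) i j ∧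
      mXY A x (2 * t + 2) i j ≤ x i ∧
      x i ≤ mXY A x (2 * t + 3) i j ∧
      mXY A x (2 * t + 3) i j ≤ mXY A x (2 * t + 1) i j ∧
      mYX A x (2 * t + 1) j i ≤ mYX A x (2 * t + 3) j i ∧
      mYX A x (2 * t + 3) j i ≤ x i ∧
      x i ≤ mYX A x (2 * t + 2) j i ∧
      mYX A x (2 * t + 2) j i ≤ mYX A x (2 * t) j i) ∧
    (∀ (i : Fin n) (t : ℕ), xhat A x (2 * t) i ≤ x i ∧ x i ≤ xhat A x (2 * t + 1) i) ∧
    (∀ (S : Finset (Fin n)) (t : ℕ),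
      0 ≤ ∑ i ∈ S, (x i - xhat A x (2 * t) i) ∧
      ∑ i ∈ S, (x i - xhat A x (2 * (t + 1)) i) ≤ ∑ i ∈ S, (x i - xhat A x (2 * t) i)) :=
  message_monotonicity_general n m c d hc A hreg x hx
end

section
/- Property P3 (unique-neighbor expansion). Let ε > 0, suppose G is (c,d)-regular, and let T ⊆ X be a nonempty set satisfying |Γ(T)| ≥ (1/2+ε)·c·|T|. Then the set T¹ = {i ∈ T : there exists j ∈ N_x(i) with N_y(j) ∩ T = {i}} satisfies |T¹| ≥ 2ε·|T|. -/
open Finset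

open MP Finset

/-- **Property P3 (unique-neighbor expansion).** If `G` is `(c,d)`-regular and `T ⊆ X` is
nonempty with `|Γ(T)| ≥ (1/2+ε)c|T|`, then the set `T¹` of vertices of `T` having a
neighbor `j` with `N_y(j) ∩ T = {i}` satisfies `|T¹| ≥ 2ε|T|`. -/
theorem property_P3 (n m c d : ℕ)
    (hn : 0 < n) (hm : 0 < m) (hc : 0 < c) (hd : 0 < d)
    (A : Fin m → Fin n → Bool) (ε : ℝ) (hε : 0 < ε)
    (hreg : IsRegular A c d)
    (T : Finset (Fin n)) (hT : T.Nonempty)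
    (hexp : (1 / 2 + ε) * (c : ℝ) * (T.card : ℝ) ≤ ((Gam A T).card : ℝ)) :
    2 * ε * (T.card : ℝ) ≤
      ((T.filter (fun i => ∃ j ∈ nhdX A i, nhdY A j ∩ T = {i})).card : ℝ) := by
  classical
  obtain ⟨hX, hY⟩ := hreg
  set Γ := Gam A T with hΓ
  set T1 := T.filter (fun i => ∃ j ∈ nhdX A i, nhdY A j ∩ T = {i}) with hT1
  set U := Γ.filter (fun j => (nhdY A j ∩ T).card = 1) with hU
  have hinter : ∀ j, nhdY A j ∩ T = T.filter (fun i => A j i = true) := by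
    intro j; ext i
    simp [nhdY, Finset.mem_filter, Finset.mem_inter, and_comm]
  have hmemΓ : ∀ (j : Fin m) (i : Fin n), i ∈ T → A j i = true → j ∈ Γ := by
    intro j i hiT hA
    rw [hΓ]
    exact Finset.mem_biUnion.2 ⟨i, hiT, by simp [nhdX, hA]⟩
  -- edge count
  have hedge : ∑ j ∈ Γ, (nhdY A j ∩ T).card = c * T.card := by
    have h2 : ∑ j ∈ Γ, (nhdY A j ∩ T).card = ∑ j : Fin m, (nhdY A j ∩ T).card := by
      refine Finset.sum_subset (Finset.subset_univ _) ?_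
      intro j _ hj
      rw [Finset.card_eq_zero, Finset.eq_empty_iff_forall_notMem]
      intro i hi
      rw [hinter] at hi
      obtain ⟨hiT, hA⟩ := Finset.mem_filter.1 hi
      exact hj (hmemΓ j i hiT hA)
    rw [h2]
    have h3 : ∀ j : Fin m, (nhdY A j ∩ T).card = ∑ i ∈ T, if A j i = true then 1 else 0 := by
      intro j; rw [hinter, Finset.card_filter]
    simp only [h3]
    rw [Finset.sum_comm]
    have h4 : ∀ i ∈ T, (∑ j : Fin m, if A j i = true then 1 else 0) = c := by
      intro i _
      rw [← Finset.card_filter]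
      exact hX i
    rw [Finset.sum_congr rfl h4, Finset.sum_const, smul_eq_mul, mul_comm]
  have hΓpos : ∀ j ∈ Γ, 1 ≤ (nhdY A j ∩ T).card := by
    intro j hj
    rw [hΓ, Gam] at hj
    obtain ⟨i, hiT, hiN⟩ := Finset.mem_biUnion.1 hj
    refine Finset.card_pos.2 ⟨i, Finset.mem_inter.2 ⟨?_, hiT⟩⟩
    simp only [nhdX, Finset.mem_filter] at hiN
    simp [nhdY, hiN.2]
  -- |U| + 2|Γ \ U| ≤ c|T|
  have hVsub : Γ.filter (fun j => ¬ (nhdY A j ∩ T).card = 1) = Γ \ U := by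
    rw [hU, Finset.sdiff_eq_filter]
    apply Finset.filter_congr
    intro j hj
    simp [hj]
  have hsplit : U.card + 2 * (Γ \ U).card ≤ c * T.card := by
    rw [← hedge, ← Finset.sum_filter_add_sum_filter_not Γ (fun j => (nhdY A j ∩ T).card = 1)]
    have hUsum : ∑ j ∈ U, (nhdY A j ∩ T).card = U.card := by
      rw [Finset.card_eq_sum_ones]
      exact Finset.sum_congr rfl (fun j hj => (Finset.mem_filter.1 hj).2)
    have hVsum : 2 * (Γ \ U).card ≤ ∑ j ∈ Γ \ U, (nhdY A j ∩ T).card := by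
      calc 2 * (Γ \ U).card = ∑ _j ∈ Γ \ U, 2 := by
            rw [Finset.sum_const, smul_eq_mul, mul_comm]
        _ ≤ _ := by
            refine Finset.sum_le_sum ?_
            intro j hj
            have hjΓ := (Finset.mem_sdiff.1 hj).1
            have hne : ¬ (nhdY A j ∩ T).card = 1 := fun h =>
              (Finset.mem_sdiff.1 hj).2 (Finset.mem_filter.2 ⟨hjΓ, h⟩)
            have h1 := hΓpos j hjΓ
            omega
    rw [hVsub] at *
    exact Nat.add_le_add (le_of_eq hUsum.symm) hVsum
  have hcardUV : U.card + (Γ \ U).card = Γ.card := by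
    rw [← hVsub]
    exact Finset.card_filter_add_card_filter_not _
  -- U ⊆ Γ(T1)
  have hUsub : U ⊆ Gam A T1 := by
    intro j hj
    obtain ⟨hjΓ, hcard⟩ := Finset.mem_filter.1 hj
    obtain ⟨i, hi⟩ := Finset.card_eq_one.1 hcard
    have hiT : i ∈ T := by
      have : i ∈ nhdY A j ∩ T := hi ▸ Finset.mem_singleton_self i
      exact (Finset.mem_inter.1 this).2
    have hiN : A j i = true := by
      have : i ∈ nhdY A j ∩ T := hi ▸ Finset.mem_singleton_self i
      have := (Finset.mem_inter.1 this).1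
      simpa [nhdY] using this
    have hjX : j ∈ nhdX A i := by simp [nhdX, hiN]
    have hiT1 : i ∈ T1 := Finset.mem_filter.2 ⟨hiT, ⟨j, hjX, hi⟩⟩
    exact Finset.mem_biUnion.2 ⟨i, hiT1, hjX⟩
  have hGamT1 : (Gam A T1).card ≤ c * T1.card := by
    calc (Gam A T1).card ≤ ∑ i ∈ T1, (nhdX A i).card := Finset.card_biUnion_le
      _ = c * T1.card := by
          rw [Finset.sum_congr rfl (fun i _ => hX i), Finset.sum_const, smul_eq_mul, mul_comm]
  have hUT1 : U.card ≤ c * T1.card := le_trans (Finset.card_le_card hUsub) hGamT1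
  -- real arithmetic
  have h1 : (2 : ℝ) * ε * c * T.card ≤ (U.card : ℝ) := by
    have hΓR : 2 * ((1 / 2 + ε) * (c : ℝ) * T.card) ≤ 2 * (Γ.card : ℝ) := by linarith
    have hER : (U.card : ℝ) + 2 * ((Γ \ U).card : ℝ) ≤ (c : ℝ) * T.card := by
      exact_mod_cast hsplit
    have hCR : (U.card : ℝ) + ((Γ \ U).card : ℝ) = (Γ.card : ℝ) := by exact_mod_cast hcardUV
    nlinarith
  have h2 : (U.card : ℝ) ≤ (c : ℝ) * T1.card := by exact_mod_cast hUT1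
  have hcR : (0 : ℝ) < c := by exact_mod_cast hc
  nlinarith
end

section
/- Property P2 (local correctness of upper bounds). Suppose every i ∈ X has degree c ≥ 1 and every j ∈ Y has degree d ≥ 1, let x ∈ ℝ₊ⁿ and run the message-passing algorithm on y = Ax. Fix t ≥ 0 and i ∈ X. If there exists j ∈ N_x(i) such that x̂_k^{2t} = x_k for every k ∈ N_y(j) ∖ {i}, then x̂_i^{2t+1} = x_i. -/
open Finset

open MP Finset

lemma MP.nhdX_nonempty {n m c d : ℕ} (hc : 1 ≤ c) {A : Fin m → Fin n → Bool}
    (hreg : IsRegular A c d) (i : Fin n) : (nhdX A i).Nonempty := by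
  rw [← Finset.card_pos, hreg.1 i]; omega

lemma MP.mem_nhdY_of_mem_nhdX {n m : ℕ} {A : Fin m → Fin n → Bool} {i : Fin n} {l : Fin m}
    (h : l ∈ nhdX A i) : i ∈ nhdY A l := by
  simp only [nhdX, nhdY, Finset.mem_filter, Finset.mem_univ, true_and] at *
  exact h

lemma MP.msgY_split {n m : ℕ} {A : Fin m → Fin n → Bool} (x z : Fin n → ℝ)
    {i : Fin n} {l : Fin m} (h : l ∈ nhdX A i) :
    msgY A x z l i = x i + ∑ k ∈ (nhdY A l).erase i, (x k - z k) := by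
  have hi := MP.mem_nhdY_of_mem_nhdX h
  rw [msgY, yvec, ← Finset.add_sum_erase _ x hi, Finset.sum_sub_distrib]
  ring

lemma MP.xhat_bounds {n m c d : ℕ} (hc : 1 ≤ c) {A : Fin m → Fin n → Bool}
    (hreg : IsRegular A c d) (x : Fin n → ℝ) (hx : ∀ i, 0 ≤ x i) :
    ∀ s i, (Even s → xhat A x s i ≤ x i) ∧ (¬ Even s → x i ≤ xhat A x s i) := by
  intro s
  induction s with
  | zero => intro i; exact ⟨fun _ => hx i, fun h => absurd Even.zero h⟩
  | succ s ih =>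
    intro i
    have hne : ((fun l => msgY A x (xhat A x s) l i) ''
        (↑(nhdX A i) : Set (Fin m))).Nonempty := by
      obtain ⟨l, hl⟩ := MP.nhdX_nonempty hc hreg i
      exact ⟨_, ⟨l, hl, rfl⟩⟩
    constructor
    · intro hev
      have hodd : ¬ Even s := by simpa using (Nat.even_add_one.mp hev)
      rw [xhat]; simp only [if_pos hev]
      refine max_le (hx i) (Real.sSup_le ?_ (hx i))
      rintro v ⟨l, hl, rfl⟩
      beta_reduce; rw [MP.msgY_split x _ (by exact_mod_cast hl)]
      have : ∑ k ∈ (nhdY A l).erase i, (x k - xhat A x s k) ≤ 0 := by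
        apply Finset.sum_nonpos
        intro k _
        have := (ih k).2 hodd
        linarith
      linarith
    · intro hodd
      have hev : Even s := by
        rcases Nat.even_or_odd s with h | h
        · exact h
        · exact absurd (by simpa [Nat.even_add_one] using h) hodd
      rw [xhat]; simp only [if_neg hodd]
      refine le_csInf hne ?_
      rintro v ⟨l, hl, rfl⟩
      beta_reduce; rw [MP.msgY_split x _ (by exact_mod_cast hl)]
      have : 0 ≤ ∑ k ∈ (nhdY A l).erase i, (x k - xhat A x s k) := by
        apply Finset.sum_nonneg
        intro k _
        have := (ih k).1 hev
        linarith
      linarith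

/-- **Property P2 (local correctness of upper bounds).** If some `j ∈ N_x(i)` has all its
other neighbors' lower bounds correct at time `2t`, then the upper bound at `i` is correct
at time `2t+1`. -/
theorem property_P2 (n m c d : ℕ)
    (hn : 0 < n) (hm : 0 < m) (hc : 1 ≤ c) (hd : 1 ≤ d)
    (A : Fin m → Fin n → Bool) (hreg : IsRegular A c d)
    (x : Fin n → ℝ) (hx : ∀ i, 0 ≤ x i)
    (t : ℕ) (i : Fin n) (j : Fin m) (hj : j ∈ nhdX A i)
    (hcorrect : ∀ k ∈ (nhdY A j).erase i, xhat A x (2 * t) k = x k) :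
    xhat A x (2 * t + 1) i = x i := by
  have hodd : ¬ Even (2 * t + 1) := by simp [Nat.even_add_one]
  rw [xhat]; simp only [if_neg hodd]
  set S := ((fun l => msgY A x (xhat A x (2 * t)) l i) ''
      (↑(nhdX A i) : Set (Fin m))) with hS
  have hmem : x i ∈ S := by
    refine ⟨j, hj, ?_⟩
    beta_reduce; rw [MP.msgY_split x _ hj]
    rw [Finset.sum_eq_zero (fun k hk => by rw [hcorrect k hk]; ring)]
    ring
  have hfin : S.Finite := Set.Finite.image _ ((nhdX A i).finite_toSet)
  apply le_antisymm
  · exact csInf_le hfin.bddBelow hmem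
  · refine le_csInf ⟨_, hmem⟩ ?_
    rintro v ⟨l, hl, rfl⟩
    beta_reduce; rw [MP.msgY_split x _ (by exact_mod_cast hl)]
    have : 0 ≤ ∑ k ∈ (nhdY A l).erase i, (x k - xhat A x (2 * t) k) := by
      apply Finset.sum_nonneg
      intro k _
      have := (MP.xhat_bounds hc hreg x hx (2 * t) k).1 (even_two_mul t)
      linarith
    linarith
end

section
/- Lemma (weak error bound). Let ε > 0 and suppose G is a (c,d)-regular (⌊2k/(1+2ε)+1⌋, 1/2+ε)-expander. Let x ∈ ℝ₊ⁿ and run the message-passing algorithm on y = Ax. Then there exists a constant C depending only on ε such that for some nonnegative integer t ≤ C·(1+log(k+1)), the estimate satisfies ‖x − x̂^{2t}‖₁ ≤ C·(1+log(k+1))·(cd)^{C·(1+log(k+1))}·‖x − x^(k)‖₁. -/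
open Finset

open MP Finset

/-! Write `eᵤ = (-1)ᵘ (x - x̂ᵘ)`, which is nonnegative. Along any check `j` of `i`, `eᵤ₊₁(i)` is at
most the sum of `eᵤ` over the other `d - 1` neighbours of `j`. Hence if `i` is bad at time `u + 1`
(error above `(d - 1)ᵘ⁺¹ r` with `r = ‖x - x⁽ᵏ⁾‖₁`), every check of `i` has another neighbour that
is bad at time `u`. The bad set at time `0` lies in the support of `x⁽ᵏ⁾`, and all later ones lie
in the set of variables whose checks all lie in `Γ` of that support, which expansion keeps below
`⌊2k/(1+2ε)+1⌋`. So a variable bad at time `u + 1` owns no check that is unique within a set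
containing the bad sets at times `u` and `u + 1`, while expansion gives a `2ε` fraction of every
small set such a check: peeling these owners off repeatedly empties everything after
`O(log k / ε)` rounds. Then the error is at most `(d - 1)²ᵗ r` on the `k` coordinates of the
support and at most `|xᵢ - x⁽ᵏ⁾ᵢ|` off it. -/

namespace MP

variable {n m : ℕ} {A : Fin m → Fin n → Bool}

theorem mem_nhdX_iff_mem_nhdY {i : Fin n} {j : Fin m} : j ∈ nhdX A i ↔ i ∈ nhdY A j := by
  simp [nhdX, nhdY]

theorem mem_Gam {S : Finset (Fin n)} {j : Fin m} : j ∈ Gam A S ↔ ∃ i ∈ S, j ∈ nhdX A i :=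
  mem_biUnion

theorem Gam_mono {S T : Finset (Fin n)} (h : S ⊆ T) : Gam A S ⊆ Gam A T :=
  biUnion_subset_biUnion_of_subset_left _ h

theorem card_Gam_le {c : ℕ} (hdeg : ∀ i, (nhdX A i).card = c) (S : Finset (Fin n)) :
    (Gam A S).card ≤ c * S.card := by
  rw [mul_comm]
  exact card_biUnion_le_card_mul _ _ _ fun i _ => (hdeg i).le

section MessagePassing

variable (A) (x : Fin n → ℝ)

theorem msgY_eq_add_sum (z : Fin n → ℝ) {i : Fin n} {j : Fin m} (h : i ∈ nhdY A j) :
    msgY A x z j i = x i + ∑ l ∈ (nhdY A j).erase i, (x l - z l) := by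
  rw [msgY, yvec, sum_sub_distrib, ← add_sum_erase _ x h]
  ring

variable {A x} {u : ℕ} {i : Fin n}

theorem xhat_succ_of_even (hu : Even u) :
    xhat A x (u + 1) i = sInf ((fun l => msgY A x (xhat A x u) l i) '' ↑(nhdX A i)) :=
  if_neg (Nat.not_even_iff_odd.2 hu.add_one)

theorem xhat_succ_of_odd (hu : Odd u) :
    xhat A x (u + 1) i = max 0 (sSup ((fun l => msgY A x (xhat A x u) l i) '' ↑(nhdX A i))) :=
  if_pos hu.add_one

theorem xhat_succ_le_msgY (hu : Even u) {j : Fin m} (hj : j ∈ nhdX A i) :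
    xhat A x (u + 1) i ≤ msgY A x (xhat A x u) j i := by
  rw [xhat_succ_of_even hu]
  exact csInf_le ((nhdX A i).finite_toSet.image _).bddBelow ⟨j, hj, rfl⟩

theorem le_xhat_succ (hu : Even u) (hne : (nhdX A i).Nonempty) {b : ℝ}
    (h : ∀ j ∈ nhdX A i, b ≤ msgY A x (xhat A x u) j i) : b ≤ xhat A x (u + 1) i := by
  rw [xhat_succ_of_even hu]
  exact le_csInf (hne.to_set.image _) (by rintro _ ⟨j, hj, rfl⟩; exact h j hj)

theorem msgY_le_xhat_succ (hu : Odd u) {j : Fin m} (hj : j ∈ nhdX A i) :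
    msgY A x (xhat A x u) j i ≤ xhat A x (u + 1) i := by
  rw [xhat_succ_of_odd hu]
  exact le_max_of_le_right (le_csSup ((nhdX A i).finite_toSet.image _).bddAbove ⟨j, hj, rfl⟩)

theorem xhat_succ_le (hu : Odd u) {b : ℝ} (hb : 0 ≤ b)
    (h : ∀ j ∈ nhdX A i, msgY A x (xhat A x u) j i ≤ b) : xhat A x (u + 1) i ≤ b := by
  rw [xhat_succ_of_odd hu]
  exact max_le hb (Real.sSup_le (by rintro _ ⟨j, hj, rfl⟩; exact h j hj) hb)

theorem xhat_nonneg_of_even (hu : Even u) : 0 ≤ xhat A x u i := by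
  rcases u with _ | u
  · exact le_rfl
  · rw [xhat_succ_of_odd (Nat.not_even_iff_odd.1 (Nat.even_add_one.1 hu))]
    exact le_max_left _ _

variable (A x) in
/-- The estimates alternate between lower bounds (even `u`) and upper bounds (odd `u`) on `x`,
so this is the distance of `x̂ᵘ` from `x`. -/
noncomputable def xhatErr (u : ℕ) (i : Fin n) : ℝ := (-1) ^ u * (x i - xhat A x u i)

theorem xhatErr_succ_le {j : Fin m} (hj : j ∈ nhdX A i) :
    xhatErr A x (u + 1) i ≤ ∑ l ∈ (nhdY A j).erase i, xhatErr A x u l := by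
  have hmsg := msgY_eq_add_sum A x (xhat A x u) (mem_nhdX_iff_mem_nhdY.1 hj)
  rcases Nat.even_or_odd u with hu | hu
  · have := xhat_succ_le_msgY (x := x) hu hj
    simp only [xhatErr, hu.neg_one_pow, hu.add_one.neg_one_pow, one_mul]
    linarith
  · have := msgY_le_xhat_succ (x := x) hu hj
    simp only [xhatErr, hu.neg_one_pow, hu.add_one.neg_one_pow, one_mul, neg_one_mul,
      sum_neg_distrib]
    linarith

theorem xhatErr_nonneg (hne : ∀ i, (nhdX A i).Nonempty) (hx : ∀ i, 0 ≤ x i) (u : ℕ) (i : Fin n) :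
    0 ≤ xhatErr A x u i := by
  induction u generalizing i with
  | zero => simpa [xhatErr, xhat] using hx i
  | succ u ih =>
    have hsum : ∀ j ∈ nhdX A i, 0 ≤ ∑ l ∈ (nhdY A j).erase i, xhatErr A x u l :=
      fun _ _ => sum_nonneg fun l _ => ih l
    rcases Nat.even_or_odd u with hu | hu
    · have : x i ≤ xhat A x (u + 1) i := le_xhat_succ hu (hne i) fun j hj => by
        have := hsum j hj
        simp only [xhatErr, hu.neg_one_pow, one_mul] at this
        rw [msgY_eq_add_sum A x _ (mem_nhdX_iff_mem_nhdY.1 hj)]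
        linarith
      simp only [xhatErr, hu.add_one.neg_one_pow]
      linarith
    · have : xhat A x (u + 1) i ≤ x i := xhat_succ_le hu (hx i) fun j hj => by
        have := hsum j hj
        simp only [xhatErr, hu.neg_one_pow, neg_one_mul, sum_neg_distrib] at this
        rw [msgY_eq_add_sum A x _ (mem_nhdX_iff_mem_nhdY.1 hj)]
        linarith
      simp only [xhatErr, hu.add_one.neg_one_pow, one_mul]
      linarith

end MessagePassing

section Peeling

variable (A) in
def Supports (V S : Finset (Fin n)) : Prop :=
  ∀ i ∈ S, ∀ j ∈ nhdX A i, ∃ l ∈ (nhdY A j).erase i, l ∈ V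

variable (A) in
def uniqueOwners (V : Finset (Fin n)) : Finset (Fin n) :=
  V.filter fun i => ∃ j ∈ nhdX A i, nhdY A j ∩ V = {i}

variable (A) in
def peel (W : Finset (Fin n)) : ℕ → Finset (Fin n)
  | 0 => W
  | s + 1 => peel W s \ uniqueOwners A (peel W s)

variable (A) in
def arena (F : Finset (Fin n)) : Finset (Fin n) :=
  F ∪ univ.filter fun i => nhdX A i ⊆ Gam A F

theorem Gam_arena (F : Finset (Fin n)) : Gam A (arena A F) = Gam A F := by
  refine (Gam_mono subset_union_left).antisymm' fun j hj => ?_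
  obtain ⟨i, hi, hij⟩ := mem_Gam.1 hj
  rcases mem_union.1 hi with hi | hi
  · exact mem_Gam.2 ⟨i, hi, hij⟩
  · exact (mem_filter.1 hi).2 hij

theorem Supports.subset_sdiff_uniqueOwners {V S P : Finset (Fin n)} (h : Supports A V S)
    (hV : V ⊆ P) (hS : S ⊆ P) : S ⊆ P \ uniqueOwners A P := by
  intro i hi
  refine mem_sdiff.2 ⟨hS hi, fun hown => ?_⟩
  obtain ⟨-, j, hj, hunique⟩ := mem_filter.1 hown
  obtain ⟨l, hl, hlV⟩ := h i hi j hj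
  have : l ∈ nhdY A j ∩ P := mem_inter.2 ⟨mem_of_mem_erase hl, hV hlV⟩
  rw [hunique, mem_singleton] at this
  exact ne_of_mem_erase hl this

theorem Supports.subset_arena {V S F : Finset (Fin n)} (h : Supports A V S)
    (hV : V ⊆ arena A F) : S ⊆ arena A F := by
  intro i hi
  refine mem_union_right _ (mem_filter.2 ⟨mem_univ _, fun j hj => ?_⟩)
  obtain ⟨l, hl, hlV⟩ := h i hi j hj
  rw [← Gam_arena]
  exact mem_Gam.2 ⟨l, hV hlV, mem_nhdX_iff_mem_nhdY.2 (mem_of_mem_erase hl)⟩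

theorem subset_peel_of_supports (B : ℕ → Finset (Fin n)) (hB : ∀ u, Supports A (B u) (B (u + 1)))
    (u : ℕ) : B u ⊆ peel A (arena A (B 0)) u := by
  have harena : ∀ u, B u ⊆ arena A (B 0) := by
    intro u
    induction u with
    | zero => exact subset_union_left
    | succ u ih => exact (hB u).subset_arena ih
  have key : ∀ s u, B (u + s) ⊆ peel A (arena A (B 0)) s := by
    intro s
    induction s with
    | zero => exact harena
    | succ s ih =>
      intro u
      have hnext := ih (u + 1)
      rw [Nat.add_right_comm] at hnext
      exact (hB (u + s)).subset_sdiff_uniqueOwners (ih u) hnext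
  simpa using key u 0

theorem peel_subset (W : Finset (Fin n)) (s : ℕ) : peel A W s ⊆ W := by
  induction s with
  | zero => exact Subset.rfl
  | succ s ih => exact sdiff_subset.trans ih

end Peeling

section Expansion

variable {c K : ℕ} {α : ℝ}

theorem IsExpander.le_one (hexp : IsExpander A c K α) (hdeg : ∀ i, (nhdX A i).card = c)
    (hc : 0 < c) (hK : 1 ≤ K) (i : Fin n) : α ≤ 1 := by
  have h := hexp {i} (by simpa using hK)
  rw [Gam, singleton_biUnion, hdeg, card_singleton, Nat.cast_one, mul_one] at h
  exact le_of_mul_le_mul_right (by simpa using h) (by exact_mod_cast hc)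

theorem card_arena_le (hdeg : ∀ i, (nhdX A i).card = c) (hc : 0 < c)
    (hexp : IsExpander A c K α) (hα : α ≤ 1) {F : Finset (Fin n)}
    (hF : (F.card : ℝ) < α * K) : (arena A F).card ≤ K := by
  have hFK : F.card ≤ K := by
    have : (F.card : ℝ) < K := hF.trans_le (by nlinarith [(K.cast_nonneg : (0 : ℝ) ≤ K)])
    exact_mod_cast this.le
  by_contra! hlt
  obtain ⟨S, hFS, hSW, hS⟩ := exists_subsuperset_card_eq subset_union_left hFK hlt.le
  have hΓ : (Gam A S).card ≤ c * F.card :=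
    (card_le_card (Gam_mono (T := arena A F) hSW)).trans
      (by rw [Gam_arena]; exact card_Gam_le hdeg F)
  have h := hexp S hS.le
  rw [hS] at h
  have hΓ' : ((Gam A S).card : ℝ) ≤ c * F.card := by exact_mod_cast hΓ
  have hc' : (0 : ℝ) < c := by exact_mod_cast hc
  nlinarith

theorem sum_card_inter_nhdY (hdeg : ∀ i, (nhdX A i).card = c) (V : Finset (Fin n)) :
    ∑ j ∈ Gam A V, (nhdY A j ∩ V).card = c * V.card := by
  have h := sum_card_bipartiteAbove_eq_sum_card_bipartiteBelow (fun i j => A j i = true)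
    (s := V) (t := Gam A V)
  have habove : ∀ i ∈ V, bipartiteAbove (fun i j => A j i = true) (Gam A V) i = nhdX A i := by
    intro i hi
    ext j
    simp only [bipartiteAbove, mem_filter, nhdX, mem_univ, true_and, and_iff_right_iff_imp]
    exact fun hij => mem_Gam.2 ⟨i, hi, by simpa [nhdX] using hij⟩
  have hbelow : ∀ j, bipartiteBelow (fun i j => A j i = true) V j = nhdY A j ∩ V := by
    intro j
    ext i
    simp [bipartiteBelow, nhdY, and_comm]
  calc ∑ j ∈ Gam A V, (nhdY A j ∩ V).card
      = ∑ j ∈ Gam A V, (bipartiteBelow (fun i j => A j i = true) V j).card := by simp only [hbelow]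
    _ = ∑ i ∈ V, (bipartiteAbove (fun i j => A j i = true) (Gam A V) i).card := h.symm
    _ = ∑ i ∈ V, c := sum_congr rfl fun i hi => by rw [habove i hi, hdeg]
    _ = c * V.card := by rw [sum_const, smul_eq_mul, mul_comm]

/-- Unique-neighbour expansion: checks of `Γ(V)` with at least two neighbours in `V` use up
two edges each, so `α`-expansion leaves at least `(2α - 1) c |V|` checks with a unique
neighbour, and these are covered by the neighbourhoods of the unique owners. -/
theorem card_uniqueOwners_ge (hdeg : ∀ i, (nhdX A i).card = c) (hc : 0 < c)
    (hexp : IsExpander A c K α) {V : Finset (Fin n)} (hV : V.card ≤ K) :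
    (2 * α - 1) * V.card ≤ (uniqueOwners A V).card := by
  set U := (Gam A V).filter fun j => (nhdY A j ∩ V).card = 1
  have hedges : 2 * (Gam A V).card ≤ c * V.card + U.card :=
    calc 2 * (Gam A V).card = ∑ j ∈ Gam A V, 2 := by rw [sum_const, smul_eq_mul, mul_comm]
      _ ≤ ∑ j ∈ Gam A V, ((nhdY A j ∩ V).card + if (nhdY A j ∩ V).card = 1 then 1 else 0) := by
        refine sum_le_sum fun j hj => ?_
        obtain ⟨i, hi, hij⟩ := mem_Gam.1 hj
        have : 0 < (nhdY A j ∩ V).card :=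
          card_pos.2 ⟨i, mem_inter.2 ⟨mem_nhdX_iff_mem_nhdY.1 hij, hi⟩⟩
        split_ifs <;> omega
      _ = c * V.card + U.card := by rw [sum_add_distrib, sum_card_inter_nhdY hdeg, card_filter]
  have hU : U ⊆ Gam A (uniqueOwners A V) := by
    intro j hj
    obtain ⟨-, hj1⟩ := mem_filter.1 hj
    obtain ⟨i, hi⟩ := card_eq_one.1 hj1
    obtain ⟨hij, hiV⟩ := mem_inter.1 (hi ▸ mem_singleton_self i)
    have hji := mem_nhdX_iff_mem_nhdY.2 hij
    exact mem_Gam.2 ⟨i, mem_filter.2 ⟨hiV, j, hji, hi⟩, hji⟩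
  have hUc : U.card ≤ c * (uniqueOwners A V).card :=
    (card_le_card hU).trans (card_Gam_le hdeg _)
  have hexpV := hexp V hV
  have hedges' : 2 * ((Gam A V).card : ℝ) ≤ c * V.card + c * (uniqueOwners A V).card := by
    exact_mod_cast hedges.trans (Nat.add_le_add_left hUc _)
  have hc' : (0 : ℝ) < c := by exact_mod_cast hc
  nlinarith

theorem card_peel_le (hdeg : ∀ i, (nhdX A i).card = c) (hc : 0 < c)
    (hexp : IsExpander A c K α) (hα : α ≤ 1) {W : Finset (Fin n)} (hW : W.card ≤ K) (s : ℕ) :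
    ((peel A W s).card : ℝ) ≤ (2 - 2 * α) ^ s * W.card := by
  induction s with
  | zero => simp [peel]
  | succ s ih =>
    set P := peel A W s
    have hown :=
      card_uniqueOwners_ge hdeg hc hexp ((card_le_card (peel_subset (A := A) W s)).trans hW)
    have hsplit : ((peel A W (s + 1)).card : ℝ) + (uniqueOwners A P).card = P.card := by
      exact_mod_cast card_sdiff_add_card_eq_card (filter_subset _ P)
    calc ((peel A W (s + 1)).card : ℝ) ≤ (2 - 2 * α) * P.card := by linarith
      _ ≤ (2 - 2 * α) * ((2 - 2 * α) ^ s * W.card) := by gcongr; linarith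
      _ = (2 - 2 * α) ^ (s + 1) * W.card := by ring

end Expansion

theorem l1_nonneg (v : Fin n → ℝ) : 0 ≤ l1 v := sum_nonneg fun _ _ => abs_nonneg _

section BadSets

variable (A x) in
noncomputable def badSet (τ : ℝ) (u : ℕ) : Finset (Fin n) :=
  univ.filter fun i => τ < xhatErr A x u i

/-- A check of `i` whose `d - 1` other neighbours all have error at most `τ` at time `u` forces
error at most `(d - 1) τ` on `i` at time `u + 1`. -/
theorem supports_badSet {d : ℕ} (hdeg : ∀ j, (nhdY A j).card = d) (τ : ℝ) (u : ℕ) :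
    Supports A (badSet A x τ u) (badSet A x ((d - 1) * τ) (u + 1)) := by
  intro i hi j hj
  by_contra! hnone
  have hle : ∀ l ∈ (nhdY A j).erase i, xhatErr A x u l ≤ τ := fun l hl => by
    simpa [badSet] using hnone l hl
  have hcard : (((nhdY A j).erase i).card : ℝ) = d - 1 := by
    rw [← hdeg j, ← card_erase_add_one (mem_nhdX_iff_mem_nhdY.1 hj)]
    push_cast
    ring
  have hsum := sum_le_card_nsmul _ _ _ hle
  rw [nsmul_eq_mul, hcard] at hsum
  have hstep := xhatErr_succ_le (x := x) (u := u) hj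
  simp only [badSet, mem_filter, mem_univ, true_and] at hi
  linarith

theorem badSet_zero_subset {xk : Fin n → ℝ} :
    badSet A x (l1 fun i => x i - xk i) 0 ⊆ univ.filter fun i => xk i ≠ 0 := by
  intro i hi
  simp only [badSet, xhatErr, xhat, mem_filter, mem_univ, true_and, pow_zero, one_mul,
    sub_zero] at hi ⊢
  intro h0
  have : |x i - xk i| ≤ l1 fun i => x i - xk i :=
    single_le_sum (f := fun l => |x l - xk l|) (fun l _ => abs_nonneg _) (mem_univ i)
  rw [h0, sub_zero] at this
  linarith [le_abs_self (x i)]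

theorem l1_sub_xhat_le (hne : ∀ i, (nhdX A i).Nonempty) (hx : ∀ i, 0 ≤ x i) {u : ℕ}
    (hu : Even u) {k : ℕ} {xk : Fin n → ℝ} (hxk : IsKSparse k xk) {θ : ℝ} (hθ : 0 ≤ θ)
    (h : ∀ i, xhatErr A x u i ≤ θ) :
    l1 (fun i => x i - xhat A x u i) ≤ k * θ + l1 (fun i => x i - xk i) := by
  have hpoint : ∀ i, |x i - xhat A x u i| ≤ (if xk i ≠ 0 then θ else 0) + |x i - xk i| := by
    intro i
    have herr : xhatErr A x u i = x i - xhat A x u i := by simp [xhatErr, hu.neg_one_pow]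
    rw [abs_of_nonneg (herr ▸ xhatErr_nonneg hne hx u i)]
    split_ifs with hi
    · linarith [h i, abs_nonneg (x i - xk i)]
    · rw [not_not.1 hi, sub_zero, abs_of_nonneg (hx i)]
      linarith [xhat_nonneg_of_even (A := A) (x := x) (i := i) hu]
  calc l1 (fun i => x i - xhat A x u i)
      ≤ ∑ i, ((if xk i ≠ 0 then θ else 0) + |x i - xk i|) := sum_le_sum fun i _ => hpoint i
    _ = (univ.filter fun i => xk i ≠ 0).card * θ + l1 (fun i => x i - xk i) := by
      rw [sum_add_distrib, sum_ite, sum_const_zero, add_zero, sum_const, nsmul_eq_mul]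
      rfl
    _ ≤ k * θ + l1 (fun i => x i - xk i) := by
      gcongr
      exact_mod_cast hxk

/-- The bad sets at thresholds `(d - 1)ᵘ r` form a supporting chain started inside the support
of `xk`, so they die out once the peeling of its arena does. -/
theorem l1_sub_xhat_le_of_isExpander {c d K : ℕ} {α : ℝ} (hreg : IsRegular A c d) (hc : 0 < c)
    (hexp : IsExpander A c K α) (hα : α ≤ 1) (hx : ∀ i, 0 ≤ x i) {k : ℕ} {xk : Fin n → ℝ}
    (hxk : IsKSparse k xk) (hk : (k : ℝ) < α * K) {u : ℕ} (hu : Even u)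
    (hpeel : (2 - 2 * α) ^ u * K < 1) :
    l1 (fun i => x i - xhat A x u i) ≤ (k * ((d : ℝ) - 1) ^ u + 1) * l1 (fun i => x i - xk i) := by
  set r := l1 fun i => x i - xk i
  set B : ℕ → Finset (Fin n) := fun s => badSet A x (((d : ℝ) - 1) ^ s * r) s
  have hB : ∀ s, Supports A (B s) (B (s + 1)) := fun s => by
    simpa only [B, pow_succ', mul_assoc] using supports_badSet hreg.2 _ s
  have hB0 : ((B 0).card : ℝ) < α * K := by
    have : B 0 = badSet A x r 0 := by simp [B]
    refine lt_of_le_of_lt ?_ hk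
    exact_mod_cast (card_le_card (this ▸ badSet_zero_subset)).trans hxk
  have hW := card_arena_le hreg.1 hc hexp hα hB0
  have hBu : B u = ∅ := by
    have hcard : ((B u).card : ℝ) < 1 :=
      calc ((B u).card : ℝ) ≤ (peel A (arena A (B 0)) u).card := by
            exact_mod_cast card_le_card (subset_peel_of_supports B hB u)
        _ ≤ (2 - 2 * α) ^ u * (arena A (B 0)).card := card_peel_le hreg.1 hc hexp hα hW u
        _ ≤ (2 - 2 * α) ^ u * K :=
          mul_le_mul_of_nonneg_left (by exact_mod_cast hW) (pow_nonneg (by linarith) _)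
        _ < 1 := hpeel
    exact card_eq_zero.1 (Nat.lt_one_iff.1 (by exact_mod_cast hcard))
  have hne : ∀ i, (nhdX A i).Nonempty := fun i => card_pos.1 (hreg.1 i ▸ hc)
  calc l1 (fun i => x i - xhat A x u i) ≤ k * (((d : ℝ) - 1) ^ u * r) + r :=
        l1_sub_xhat_le hne hx hu hxk (mul_nonneg (hu.pow_nonneg _) (l1_nonneg _))
          fun i => not_lt.1 (filter_eq_empty_iff.1 hBu (mem_univ i))
    _ = (k * ((d : ℝ) - 1) ^ u + 1) * r := by ring

end BadSets

theorem one_sub_pow_mul_lt_one {δ N : ℝ} (hδ : δ ≤ 1) (hN : 0 < N) {s : ℕ}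
    (hs : 1 + Real.log N ≤ δ * s) : (1 - δ) ^ s * N < 1 :=
  calc (1 - δ) ^ s * N ≤ Real.exp (-δ) ^ s * N := by
        gcongr
        linarith [Real.add_one_le_exp (-δ)]
    _ = Real.exp (Real.log N - δ * s) := by
        conv_lhs => rw [← Real.exp_log hN, ← Real.exp_nat_mul, ← Real.exp_add]
        ring_nf
    _ ≤ Real.exp (-1) := Real.exp_le_exp.2 (by linarith)
    _ < 1 := Real.exp_lt_one_iff.2 (by norm_num)

theorem le_rpow_two_mul_log {b y : ℝ} (hb : 2 ≤ b) (hy : 1 ≤ y) : y ≤ b ^ (2 * Real.log y) := by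
  rw [Real.rpow_def_of_pos (by linarith)]
  conv_lhs => rw [← Real.exp_log (by linarith : 0 < y)]
  have hlogb : Real.log 2 ≤ Real.log b := Real.log_le_log (by norm_num) hb
  refine Real.exp_le_exp.2 ?_
  nlinarith [Real.log_two_gt_d9, Real.log_nonneg hy]

theorem mul_sub_one_pow_add_one_le_mul_rpow {c d k t : ℕ} {M : ℝ} (hc : 0 < c) (hd : 0 < d)
    (ht : 0 < t) (hM : 1 ≤ M) (htM : 2 * t + 2 * Real.log (k + 1) ≤ M) :
    k * ((d : ℝ) - 1) ^ (2 * t) + 1 ≤ M * ((c : ℝ) * d) ^ M := by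
  have hc1 : (1 : ℝ) ≤ c := by exact_mod_cast hc
  have hd1 : (1 : ℝ) ≤ d := by exact_mod_cast hd
  have hb1 : 1 ≤ (c : ℝ) * d := one_le_mul_of_one_le_of_one_le hc1 hd1
  have hbM : 1 ≤ ((c : ℝ) * d) ^ M := Real.one_le_rpow hb1 (by linarith)
  obtain rfl | hd2 : d = 1 ∨ 1 < d := by omega
  · simp only [Nat.cast_one, sub_self, zero_pow (by omega : 2 * t ≠ 0), mul_zero, zero_add,
      mul_one] at hbM ⊢
    nlinarith
  · set b := (c : ℝ) * d
    have hb2 : 2 ≤ b := by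
      have : (2 : ℝ) ≤ d := by exact_mod_cast hd2
      nlinarith
    have hk1 : (1 : ℝ) ≤ k + 1 := by linarith [(k.cast_nonneg : (0 : ℝ) ≤ k)]
    calc k * ((d : ℝ) - 1) ^ (2 * t) + 1 ≤ (k + 1) * b ^ (2 * t) := by
          have : ((d : ℝ) - 1) ^ (2 * t) ≤ b ^ (2 * t) := by gcongr; nlinarith
          nlinarith [one_le_pow₀ (n := 2 * t) hb1, (k.cast_nonneg : (0 : ℝ) ≤ k)]
      _ ≤ b ^ (2 * Real.log (k + 1)) * b ^ ((2 * t : ℕ) : ℝ) := by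
          rw [Real.rpow_natCast]
          gcongr
          exact le_rpow_two_mul_log hb2 hk1
      _ = b ^ (2 * Real.log (k + 1) + 2 * t) := by
          rw [← Real.rpow_add (by linarith)]
          push_cast
          rfl
      _ ≤ b ^ M := Real.rpow_le_rpow_of_exponent_le hb1 (by linarith)
      _ ≤ M * b ^ M := le_mul_of_one_le_left (by linarith) hM

theorem floor_expansion_bounds {ε : ℝ} (hε : 0 < ε) (k : ℕ) :
    1 ≤ ⌊2 * (k : ℝ) / (1 + 2 * ε) + 1⌋₊ ∧
      (k : ℝ) < (1 / 2 + ε) * ⌊2 * (k : ℝ) / (1 + 2 * ε) + 1⌋₊ ∧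
      (⌊2 * (k : ℝ) / (1 + 2 * ε) + 1⌋₊ : ℝ) ≤ 2 * k + 1 := by
  set v := 2 * (k : ℝ) / (1 + 2 * ε) with hv_def
  have hk : (0 : ℝ) ≤ k := k.cast_nonneg
  have hv : 0 ≤ v := by positivity
  have hvk : (1 / 2 + ε) * v = k := by rw [hv_def]; field_simp
  have hv2 : v ≤ 2 * k := div_le_self (by positivity) (by linarith)
  refine ⟨Nat.le_floor (by push_cast; linarith), ?_,
    (Nat.floor_le (by positivity)).trans (by linarith)⟩
  have := Nat.lt_floor_add_one (v + 1)
  rw [← hvk]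
  gcongr
  linarith

/-- `t = ⌈(1 + log K) / (4ε)⌉` rounds of `(1 - 2ε)`-shrinking per half-iteration bring `K` below
one, and `K ≤ 2k + 1` keeps `t` of order `log (k + 1) / ε`. -/
theorem exists_time_one_sub_pow_mul_lt_one {ε : ℝ} (hε : 0 < ε) (hε2 : ε ≤ 1 / 2) {k K : ℕ}
    (hK1 : 1 ≤ K) (hK2 : (K : ℝ) ≤ 2 * k + 1) :
    ∃ t : ℕ, 0 < t ∧ (1 - 2 * ε) ^ (2 * t) * K < 1 ∧
      2 * t + 2 * Real.log (k + 1) ≤ (1 / ε + 4) * (1 + Real.log (k + 1)) := by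
  have hK : (1 : ℝ) ≤ K := Nat.one_le_cast.2 hK1
  have hlogK0 := Real.log_nonneg hK
  have hlogk : 0 ≤ Real.log ((k : ℝ) + 1) := Real.log_nonneg (by linarith)
  have hlogK : Real.log K ≤ Real.log 2 + Real.log ((k : ℝ) + 1) := by
    rw [← Real.log_mul (by norm_num) (by positivity)]
    exact Real.log_le_log (by linarith) (by linarith)
  set L := 1 + Real.log ((k : ℝ) + 1)
  set t := ⌈(1 + Real.log K) / (4 * ε)⌉₊
  have ht : (1 + Real.log K) / (4 * ε) ≤ t := Nat.le_ceil _
  have ht' : (t : ℝ) < (1 + Real.log K) / (4 * ε) + 1 := Nat.ceil_lt_add_one (by positivity)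
  have hdiv : (1 + Real.log K) / (4 * ε) ≤ L / (2 * ε) := by
    rw [div_le_div_iff₀ (by positivity) (by positivity)]
    nlinarith [Real.log_two_lt_d9]
  have hCL : (1 / ε + 4) * L = 2 * (L / (2 * ε)) + 4 * L := by field_simp
  refine ⟨t, Nat.ceil_pos.2 (by positivity), ?_, by linarith⟩
  refine one_sub_pow_mul_lt_one (by linarith) (by linarith) ?_
  rw [div_le_iff₀ (by positivity)] at ht
  push_cast
  linarith

end MP

/-- **Lemma (weak error bound).** If `G` is a `(c,d)`-regular
`(⌊2k/(1+2ε)+1⌋, 1/2+ε)`-expander, there is a constant `C` depending only on `ε` such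
that for some `t ≤ C(1+log(k+1))`,
`‖x - x̂^{2t}‖₁ ≤ C(1+log(k+1))·(cd)^{C(1+log(k+1))}·‖x - x⁽ᵏ⁾‖₁`. -/
theorem weak_error_bound (ε : ℝ) (hε : 0 < ε) :
    ∃ C : ℝ, 0 < C ∧
      ∀ (n m c d k : ℕ), 0 < n → 0 < m → 0 < c → 0 < d → 0 < k →
        ∀ A : Fin m → Fin n → Bool,
          IsRegular A c d →
          IsExpander A c (Nat.floor (2 * (k : ℝ) / (1 + 2 * ε) + 1)) (1 / 2 + ε) →
          ∀ x xk : Fin n → ℝ, (∀ i, 0 ≤ x i) → BestKSparse k x xk →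
            ∃ t : ℕ, (t : ℝ) ≤ C * (1 + Real.log ((k : ℝ) + 1)) ∧
              l1 (fun i => x i - xhat A x (2 * t) i) ≤
                C * (1 + Real.log ((k : ℝ) + 1)) *
                  ((c : ℝ) * d) ^ (C * (1 + Real.log ((k : ℝ) + 1))) *
                  l1 (fun i => x i - xk i) := by
  refine ⟨1 / ε + 4, by positivity, fun n m c d k hn _ hc hd _ A hreg hexp x xk hx hxk => ?_⟩
  obtain ⟨hK1, hkK, hK2⟩ := floor_expansion_bounds hε k
  have hα : 1 / 2 + ε ≤ 1 := hexp.le_one hreg.1 hc hK1 ⟨0, hn⟩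
  obtain ⟨t, ht0, hpeel, htM⟩ := exists_time_one_sub_pow_mul_lt_one hε (by linarith) hK1 hK2
  have ht1 : (1 : ℝ) ≤ t := Nat.one_le_cast.2 ht0
  have hlogk : 0 ≤ Real.log ((k : ℝ) + 1) := Real.log_nonneg (by simp)
  rw [show 1 - 2 * ε = 2 - 2 * (1 / 2 + ε) by ring] at hpeel
  refine ⟨t, by linarith, ?_⟩
  calc l1 (fun i => x i - xhat A x (2 * t) i)
      ≤ (k * ((d : ℝ) - 1) ^ (2 * t) + 1) * l1 (fun i => x i - xk i) :=
        l1_sub_xhat_le_of_isExpander hreg hc hexp hα hx hxk.2.1 hkK (even_two_mul t) hpeel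
    _ ≤ _ := mul_le_mul_of_nonneg_right
        (mul_sub_one_pow_add_one_le_mul_rpow hc hd ht0 (by linarith) htM) (l1_nonneg _)
end

section
/- Level-set error bound. Let ε > 0 and suppose G is a (c,d)-regular (⌊2k/(1+2ε)+1⌋, 1/2+ε)-expander. Let x ∈ ℝ₊ⁿ and run the message-passing algorithm on y = Ax. Then for every ℓ ≥ 0, Σ_{i∈S_ℓ}(x_i − x̂_i^{2ℓ}) ≤ (cd)^{2ℓ}·‖x − x^(k)‖₁. -/
open Finset

namespace MP

/-- `S' = {i ∈ X : N_x(i) ⊆ Γ(X₊)}`. -/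
def Sprime {n m : ℕ} (A : Fin m → Fin n → Bool) (P : Finset (Fin n)) : Finset (Fin n) :=
  Finset.univ.filter (fun i => nhdX A i ⊆ Gam A P)

/-- One step of the level-set construction: given the union `U` of previous levels
`S_1, …, S_{ℓ-1}`, this is `S_ℓ`. -/
def nextS {n m : ℕ} (A : Fin m → Fin n → Bool) (P U : Finset (Fin n)) : Finset (Fin n) :=
  (Sprime A P).filter (fun i => ∃ j ∈ Gam A P, nhdY A j ∩ (Sprime A P \ U) = {i})

/-- `Uacc A P ℓ = S_1 ∪ ⋯ ∪ S_ℓ`. -/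
def Uacc {n m : ℕ} (A : Fin m → Fin n → Bool) (P : Finset (Fin n)) : ℕ → Finset (Fin n)
  | 0 => ∅
  | l + 1 => Uacc A P l ∪ nextS A P (Uacc A P l)

/-- The level sets `S_ℓ`: `S_0 = X \ S'` and, for `ℓ ≥ 1`,
`S_ℓ = {i ∈ S' : ∃ j ∈ Γ(X₊), N_y(j) ∩ (S' \ (S_1 ∪ ⋯ ∪ S_{ℓ-1})) = {i}}`. -/
def Slevel {n m : ℕ} (A : Fin m → Fin n → Bool) (P : Finset (Fin n)) : ℕ → Finset (Fin n)
  | 0 => Finset.univ \ Sprime A P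
  | l + 1 => nextS A P (Uacc A P l)

end MP

open MP Finset

namespace MPAux
open MP Finset

variable {n m : ℕ} {A : Fin m → Fin n → Bool} {x : Fin n → ℝ}

lemma mem_nhdX {i : Fin n} {j : Fin m} : j ∈ nhdX A i ↔ A j i = true := by
  simp [nhdX]

lemma mem_nhdY {i : Fin n} {j : Fin m} : i ∈ nhdY A j ↔ A j i = true := by
  simp [nhdY]

lemma msgY_eq (z : Fin n → ℝ) {i : Fin n} {j : Fin m} (h : i ∈ nhdY A j) :
    msgY A x z j i = x i + ∑ k ∈ (nhdY A j).erase i, (x k - z k) := by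
  unfold msgY yvec
  rw [Finset.sum_sub_distrib, ← Finset.add_sum_erase _ x h]
  ring

lemma xhat_odd (t : ℕ) (i : Fin n) :
    xhat A x (2*t+1) i =
      sInf ((fun l => msgY A x (xhat A x (2*t)) l i) '' (↑(nhdX A i) : Set (Fin m))) := by
  rw [show (2*t+1) = (2*t)+1 from rfl, xhat]
  simp [Nat.even_add_one, parity_simps]

lemma xhat_even (t : ℕ) (i : Fin n) :
    xhat A x (2*t+2) i =
      max 0 (sSup ((fun l => msgY A x (xhat A x (2*t+1)) l i) '' (↑(nhdX A i) : Set (Fin m)))) := by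
  rw [show (2*t+2) = (2*t+1)+1 from rfl, xhat]
  simp [Nat.even_add_one, parity_simps]

lemma xhat_odd_le {t : ℕ} {i : Fin n} {j : Fin m} (hj : j ∈ nhdX A i) :
    xhat A x (2*t+1) i ≤ msgY A x (xhat A x (2*t)) j i := by
  rw [xhat_odd]
  exact csInf_le (((nhdX A i).finite_toSet.image _).bddBelow)
    ⟨j, Finset.mem_coe.mpr hj, rfl⟩

lemma le_xhat_even {t : ℕ} {i : Fin n} {j : Fin m} (hj : j ∈ nhdX A i) :
    msgY A x (xhat A x (2*t+1)) j i ≤ xhat A x (2*t+2) i := by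
  rw [xhat_even]
  exact le_max_of_le_right (le_csSup (((nhdX A i).finite_toSet.image _).bddAbove)
    ⟨j, Finset.mem_coe.mpr hj, rfl⟩)

lemma le_xhat_odd {B : ℝ} {t : ℕ} {i : Fin n} (hne : (nhdX A i).Nonempty)
    (h : ∀ j ∈ nhdX A i, B ≤ msgY A x (xhat A x (2*t)) j i) :
    B ≤ xhat A x (2*t+1) i := by
  rw [xhat_odd]
  refine le_csInf ((hne.to_set).image (fun l => msgY A x (xhat A x (2*t)) l i)) ?_
  rintro b ⟨j, hj, rfl⟩
  exact h j (Finset.mem_coe.mp hj)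

lemma xhat_even_le {B : ℝ} {t : ℕ} {i : Fin n} (hB : 0 ≤ B) (hne : (nhdX A i).Nonempty)
    (h : ∀ j ∈ nhdX A i, msgY A x (xhat A x (2*t+1)) j i ≤ B) :
    xhat A x (2*t+2) i ≤ B := by
  rw [xhat_even]
  refine max_le hB (csSup_le ((hne.to_set).image (fun l => msgY A x (xhat A x (2*t+1)) l i)) ?_)
  rintro b ⟨j, hj, rfl⟩
  exact h j (Finset.mem_coe.mp hj)

lemma xhat_even_nonneg (t : ℕ) (i : Fin n) : 0 ≤ xhat A x (2*t) i := by
  cases t with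
  | zero => simp [xhat]
  | succ t =>
      rw [show 2*(t+1) = 2*t+2 from by ring, xhat_even]
      exact le_max_left _ _

end MPAux
namespace MPAux
open MP Finset

variable {n m : ℕ} {A : Fin m → Fin n → Bool} {x : Fin n → ℝ}

lemma odd_step (hne : ∀ i, (nhdX A i).Nonempty) (t : ℕ)
    (h : ∀ k, xhat A x (2*t) k ≤ x k) (i : Fin n) :
    x i ≤ xhat A x (2*t+1) i := by
  refine le_xhat_odd (hne i) ?_
  intro j hj
  rw [msgY_eq (xhat A x (2*t)) (mem_nhdY.mpr (mem_nhdX.mp hj))]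
  have h0 : (0:ℝ) ≤ ∑ k ∈ (nhdY A j).erase i, (x k - xhat A x (2*t) k) :=
    Finset.sum_nonneg fun k _ => sub_nonneg.mpr (h k)
  linarith

lemma even_step (hx : ∀ i, 0 ≤ x i) (hne : ∀ i, (nhdX A i).Nonempty) (t : ℕ)
    (h : ∀ k, x k ≤ xhat A x (2*t+1) k) (i : Fin n) :
    xhat A x (2*t+2) i ≤ x i := by
  refine xhat_even_le (hx i) (hne i) ?_
  intro j hj
  rw [msgY_eq (xhat A x (2*t+1)) (mem_nhdY.mpr (mem_nhdX.mp hj))]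
  have h0 : ∑ k ∈ (nhdY A j).erase i, (x k - xhat A x (2*t+1) k) ≤ 0 :=
    Finset.sum_nonpos fun k _ => sub_nonpos.mpr (h k)
  linarith

lemma sandwich (hx : ∀ i, 0 ≤ x i) (hne : ∀ i, (nhdX A i).Nonempty) :
    ∀ t, (∀ i, xhat A x (2*t) i ≤ x i) ∧ (∀ i, x i ≤ xhat A x (2*t+1) i) := by
  intro t
  induction t with
  | zero =>
      have h0 : ∀ k, xhat A x (2*0) k ≤ x k := by
        intro k; simpa [xhat] using hx k
      exact ⟨h0, odd_step hne 0 h0⟩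
  | succ t ih =>
      have he : ∀ i, xhat A x (2*(t+1)) i ≤ x i := by
        intro i
        rw [show 2*(t+1) = 2*t+2 from by ring]
        exact even_step hx hne t ih.2 i
      exact ⟨he, odd_step hne (t+1) he⟩

lemma under_elem {t : ℕ} {i : Fin n} {j : Fin m} (hj : i ∈ nhdY A j) :
    x i - xhat A x (2*t+2) i ≤ ∑ k ∈ (nhdY A j).erase i, (xhat A x (2*t+1) k - x k) := by
  have h1 := le_xhat_even (x := x) (t := t) (mem_nhdX.mpr (mem_nhdY.mp hj))
  rw [msgY_eq (xhat A x (2*t+1)) hj] at h1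
  have h2 : ∑ k ∈ (nhdY A j).erase i, (xhat A x (2*t+1) k - x k)
      = - ∑ k ∈ (nhdY A j).erase i, (x k - xhat A x (2*t+1) k) := by
    rw [← Finset.sum_neg_distrib]; apply Finset.sum_congr rfl; intros; ring
  linarith

lemma over_elem {t : ℕ} {i : Fin n} {j : Fin m} (hj : i ∈ nhdY A j) :
    xhat A x (2*t+1) i - x i ≤ ∑ k ∈ (nhdY A j).erase i, (x k - xhat A x (2*t) k) := by
  have h1 := xhat_odd_le (x := x) (t := t) (mem_nhdX.mpr (mem_nhdY.mp hj))
  rw [msgY_eq (xhat A x (2*t)) hj] at h1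
  linarith

end MPAux
namespace MPAux
open MP Finset

variable {n m : ℕ} {A : Fin m → Fin n → Bool} {x : Fin n → ℝ}

lemma counting {S W : Finset (Fin n)} {g : Fin n → ℝ} (hg : ∀ k, 0 ≤ g k)
    {J : Fin n → Fin m} {M : ℕ}
    (hE : ∀ i ∈ S, (nhdY A (J i)).erase i ⊆ W)
    (hmult : ∀ k, (S.filter fun i => k ∈ (nhdY A (J i)).erase i).card ≤ M) :
    ∑ i ∈ S, ∑ k ∈ (nhdY A (J i)).erase i, g k ≤ (M : ℝ) * ∑ k ∈ W, g k := by
  have h1 : ∀ i ∈ S, ∑ k ∈ (nhdY A (J i)).erase i, g k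
      = ∑ k ∈ W, if k ∈ (nhdY A (J i)).erase i then g k else 0 := by
    intro i hi
    rw [← Finset.sum_filter, Finset.filter_mem_eq_inter,
      Finset.inter_eq_right.mpr (hE i hi)]
  rw [Finset.sum_congr rfl h1, Finset.sum_comm, Finset.mul_sum]
  apply Finset.sum_le_sum
  intro k _
  calc ∑ i ∈ S, (if k ∈ (nhdY A (J i)).erase i then g k else 0)
      = ((S.filter fun i => k ∈ (nhdY A (J i)).erase i).card : ℝ) * g k := by
        rw [← Finset.sum_filter, Finset.sum_const, nsmul_eq_mul]
    _ ≤ (M : ℝ) * g k :=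
        mul_le_mul_of_nonneg_right (by exact_mod_cast hmult k) (hg k)

lemma mult_le_cd {S : Finset (Fin n)} {J : Fin n → Fin m} {c d : ℕ}
    (hcc : ∀ i, (nhdX A i).card = c) (hdd : ∀ j, (nhdY A j).card = d)
    (hJ : ∀ i ∈ S, i ∈ nhdY A (J i)) (k : Fin n) :
    (S.filter fun i => k ∈ (nhdY A (J i)).erase i).card ≤ c * d := by
  set T := S.filter fun i => k ∈ (nhdY A (J i)).erase i with hT
  have hmap : ∀ i ∈ T, J i ∈ nhdX A k := by
    intro i hi
    have hk : k ∈ nhdY A (J i) := Finset.mem_of_mem_erase (Finset.mem_filter.mp hi).2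
    exact mem_nhdX.mpr (mem_nhdY.mp hk)
  calc T.card = ∑ j ∈ nhdX A k, (T.filter fun i => J i = j).card :=
        Finset.card_eq_sum_card_fiberwise hmap
    _ ≤ ∑ _j ∈ nhdX A k, d := by
        apply Finset.sum_le_sum
        intro j _
        refine le_trans (Finset.card_le_card ?_) (le_of_eq (hdd j))
        intro i hi
        obtain ⟨hiT, hji⟩ := Finset.mem_filter.mp hi
        have := hJ i (Finset.mem_filter.mp hiT).1
        rwa [hji] at this
    _ = c * d := by rw [Finset.sum_const, hcc k, smul_eq_mul]

lemma mult_le_c {S : Finset (Fin n)} {J : Fin n → Fin m} {c : ℕ}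
    (hcc : ∀ i, (nhdX A i).card = c)
    (hJ : ∀ i ∈ S, i ∈ nhdY A (J i))
    (hinj : ∀ i ∈ S, ∀ i' ∈ S, J i = J i' → i = i') (k : Fin n) :
    (S.filter fun i => k ∈ (nhdY A (J i)).erase i).card ≤ c := by
  rw [← hcc k]
  apply Finset.card_le_card_of_injOn J
  · intro i hi
    have hk : k ∈ nhdY A (J i) := Finset.mem_of_mem_erase (Finset.mem_filter.mp hi).2
    exact mem_nhdX.mpr (mem_nhdY.mp hk)
  · intro i hi i' hi' h
    exact hinj i (Finset.mem_of_mem_filter _ hi) i' (Finset.mem_of_mem_filter _ hi') h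

lemma P_subset_Sprime (P : Finset (Fin n)) : P ⊆ Sprime A P := by
  intro i hi
  simp only [Sprime, Finset.mem_filter, Finset.mem_univ, true_and]
  intro j hj
  exact Finset.mem_biUnion.mpr ⟨i, hi, hj⟩

lemma mem_nextS {P U : Finset (Fin n)} {i : Fin n} :
    i ∈ nextS A P U ↔ i ∈ Sprime A P ∧ ∃ j ∈ Gam A P, nhdY A j ∩ (Sprime A P \ U) = {i} := by
  simp [nextS]

end MPAux
namespace MPAux
open MP Finset

variable {n m : ℕ} {A : Fin m → Fin n → Bool} {x : Fin n → ℝ}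

lemma S0_subset (P : Finset (Fin n)) :
    (Finset.univ \ Sprime A P : Finset (Fin n)) ⊆ Finset.univ \ P := by
  intro i hi
  rcases Finset.mem_sdiff.mp hi with ⟨_, h2⟩
  exact Finset.mem_sdiff.mpr ⟨Finset.mem_univ i, fun hP => h2 (P_subset_Sprime P hP)⟩

lemma S0_count (hm : 0 < m) {c d : ℕ}
    (hcc : ∀ i, (nhdX A i).card = c) (hdd : ∀ j, (nhdY A j).card = d)
    (P : Finset (Fin n)) :
    ∃ J : Fin n → Fin m,
      (∀ i ∈ (Finset.univ \ Sprime A P : Finset (Fin n)), i ∈ nhdY A (J i)) ∧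
      (∀ i ∈ (Finset.univ \ Sprime A P : Finset (Fin n)),
        (nhdY A (J i)).erase i ⊆ Finset.univ \ P) ∧
      (∀ g : Fin n → ℝ, (∀ k, 0 ≤ g k) →
        ∑ i ∈ (Finset.univ \ Sprime A P : Finset (Fin n)), ∑ k ∈ (nhdY A (J i)).erase i, g k
          ≤ ((c : ℝ) * d) * ∑ k ∈ Finset.univ \ P, g k) := by
  classical
  set J : Fin n → Fin m := fun i =>
    if h : ∃ j, j ∈ nhdX A i ∧ j ∉ Gam A P then h.choose else ⟨0, hm⟩ with hJdef
  have hJ : ∀ i ∈ (Finset.univ \ Sprime A P : Finset (Fin n)),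
      J i ∈ nhdX A i ∧ J i ∉ Gam A P := by
    intro i hi
    have h2 : ¬ nhdX A i ⊆ Gam A P := by
      have := (Finset.mem_sdiff.mp hi).2
      simpa [Sprime] using this
    obtain ⟨j, hj1, hj2⟩ := Finset.not_subset.mp h2
    have hex : ∃ j, j ∈ nhdX A i ∧ j ∉ Gam A P := ⟨j, hj1, hj2⟩
    simp only [hJdef, dif_pos hex]
    exact hex.choose_spec
  have hJmem : ∀ i ∈ (Finset.univ \ Sprime A P : Finset (Fin n)), i ∈ nhdY A (J i) :=
    fun i hi => mem_nhdY.mpr (mem_nhdX.mp (hJ i hi).1)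
  have hE : ∀ i ∈ (Finset.univ \ Sprime A P : Finset (Fin n)),
      (nhdY A (J i)).erase i ⊆ Finset.univ \ P := by
    intro i hi k hk
    refine Finset.mem_sdiff.mpr ⟨Finset.mem_univ k, fun hkP => ?_⟩
    have hkY : k ∈ nhdY A (J i) := Finset.mem_of_mem_erase hk
    exact (hJ i hi).2 (Finset.mem_biUnion.mpr ⟨k, hkP, mem_nhdX.mpr (mem_nhdY.mp hkY)⟩)
  refine ⟨J, hJmem, hE, ?_⟩
  intro g hg
  have := counting (A := A) hg hE (fun k => mult_le_cd hcc hdd hJmem k)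
  simpa [Nat.cast_mul] using this

lemma nextS_count (hm : 0 < m) {c : ℕ}
    (hcc : ∀ i, (nhdX A i).card = c) (P U : Finset (Fin n)) :
    ∃ J : Fin n → Fin m,
      (∀ i ∈ nextS A P U, i ∈ nhdY A (J i)) ∧
      (∀ i ∈ nextS A P U,
        (nhdY A (J i)).erase i ⊆ (Finset.univ \ Sprime A P) ∪ U) ∧
      (∀ g : Fin n → ℝ, (∀ k, 0 ≤ g k) →
        ∑ i ∈ nextS A P U, ∑ k ∈ (nhdY A (J i)).erase i, g k
          ≤ (c : ℝ) * ∑ k ∈ (Finset.univ \ Sprime A P) ∪ U, g k) := by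
  classical
  set J : Fin n → Fin m := fun i =>
    if h : ∃ j, j ∈ Gam A P ∧ nhdY A j ∩ (Sprime A P \ U) = {i} then h.choose else ⟨0, hm⟩
    with hJdef
  have hJ : ∀ i ∈ nextS A P U, nhdY A (J i) ∩ (Sprime A P \ U) = {i} := by
    intro i hi
    obtain ⟨_, hex⟩ := mem_nextS.mp hi
    have hex' : ∃ j, j ∈ Gam A P ∧ nhdY A j ∩ (Sprime A P \ U) = {i} := by
      obtain ⟨j, hj1, hj2⟩ := hex; exact ⟨j, hj1, hj2⟩
    simp only [hJdef, dif_pos hex']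
    exact hex'.choose_spec.2
  have hJmem : ∀ i ∈ nextS A P U, i ∈ nhdY A (J i) := by
    intro i hi
    have h1 : i ∈ nhdY A (J i) ∩ (Sprime A P \ U) := by
      rw [hJ i hi]; exact Finset.mem_singleton_self i
    exact (Finset.mem_inter.mp h1).1
  have hinj : ∀ i ∈ nextS A P U, ∀ i' ∈ nextS A P U, J i = J i' → i = i' := by
    intro i hi i' hi' hJJ
    have h1 := hJ i hi
    have h2 := hJ i' hi'
    rw [hJJ] at h1
    rw [h1] at h2
    exact Finset.singleton_inj.mp h2
  have hE : ∀ i ∈ nextS A P U,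
      (nhdY A (J i)).erase i ⊆ (Finset.univ \ Sprime A P) ∪ U := by
    intro i hi k hk
    by_cases hk1 : k ∈ Sprime A P
    · by_cases hk2 : k ∈ U
      · exact Finset.mem_union_right _ hk2
      · exfalso
        have hkin : k ∈ nhdY A (J i) ∩ (Sprime A P \ U) :=
          Finset.mem_inter.mpr ⟨Finset.mem_of_mem_erase hk,
            Finset.mem_sdiff.mpr ⟨hk1, hk2⟩⟩
        rw [hJ i hi] at hkin
        exact (Finset.ne_of_mem_erase hk) (Finset.mem_singleton.mp hkin)
    · exact Finset.mem_union_left _ (Finset.mem_sdiff.mpr ⟨Finset.mem_univ k, hk1⟩)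
  exact ⟨J, hJmem, hE, fun g hg =>
    counting (A := A) hg hE (fun k => mult_le_c hcc hJmem hinj k)⟩

end MPAux
namespace MPAux
open MP Finset

variable {n m : ℕ} {A : Fin m → Fin n → Bool} {x : Fin n → ℝ}

lemma Qlemma (hm : 0 < m) {c d : ℕ} (hc : 0 < c)
    (hcc : ∀ i, (nhdX A i).card = c) (hdd : ∀ j, (nhdY A j).card = d)
    (hx : ∀ i, 0 ≤ x i) (P : Finset (Fin n)) {e : ℝ} (he : 0 ≤ e)
    (hPe : ∑ k ∈ Finset.univ \ P, x k ≤ e) :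
    ∀ l t, l ≤ t →
      (∑ i ∈ (Finset.univ \ Sprime A P) ∪ Uacc A P l, (x i - xhat A x (2*t) i))
      + (∑ i ∈ (Finset.univ \ Sprime A P) ∪ Uacc A P l, (xhat A x (2*t+1) i - x i))
      ≤ (1 + 2*(c:ℝ))^l * (1 + (c:ℝ)*(d:ℝ)) * e := by
  have hne : ∀ i, (nhdX A i).Nonempty := fun i =>
    Finset.card_pos.mp (by rw [hcc i]; exact hc)
  have hsand := sandwich hx hne
  have hUNn : ∀ (T : Finset (Fin n)) (t : ℕ),
      0 ≤ ∑ i ∈ T, (x i - xhat A x (2*t) i) :=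
    fun T t => Finset.sum_nonneg fun i _ => sub_nonneg.mpr ((hsand t).1 i)
  have hOVn : ∀ (T : Finset (Fin n)) (t : ℕ),
      0 ≤ ∑ i ∈ T, (xhat A x (2*t+1) i - x i) :=
    fun T t => Finset.sum_nonneg fun i _ => sub_nonneg.mpr ((hsand t).2 i)
  -- bounds for S0
  have hUN0 : ∀ t, ∑ i ∈ (Finset.univ \ Sprime A P : Finset (Fin n)),
      (x i - xhat A x (2*t) i) ≤ e := by
    intro t
    calc ∑ i ∈ (Finset.univ \ Sprime A P : Finset (Fin n)), (x i - xhat A x (2*t) i)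
        ≤ ∑ i ∈ (Finset.univ \ Sprime A P : Finset (Fin n)), x i := by
          refine Finset.sum_le_sum fun i _ => ?_
          have := xhat_even_nonneg (A := A) (x := x) t i
          linarith
      _ ≤ ∑ i ∈ Finset.univ \ P, x i :=
          Finset.sum_le_sum_of_subset_of_nonneg (S0_subset P) (fun i _ _ => hx i)
      _ ≤ e := hPe
  have hOV0 : ∀ t, ∑ i ∈ (Finset.univ \ Sprime A P : Finset (Fin n)),
      (xhat A x (2*t+1) i - x i) ≤ ((c:ℝ)*d) * e := by
    intro t
    obtain ⟨J, hJmem, hE, hcount⟩ := S0_count hm hcc hdd P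
    have h1 : ∑ i ∈ (Finset.univ \ Sprime A P : Finset (Fin n)), (xhat A x (2*t+1) i - x i)
        ≤ ∑ i ∈ (Finset.univ \ Sprime A P : Finset (Fin n)),
            ∑ k ∈ (nhdY A (J i)).erase i, (x k - xhat A x (2*t) k) :=
      Finset.sum_le_sum fun i hi => over_elem (hJmem i hi)
    have h2 := hcount (fun k => x k - xhat A x (2*t) k)
      (fun k => sub_nonneg.mpr ((hsand t).1 k))
    have h3 : ∑ k ∈ Finset.univ \ P, (x k - xhat A x (2*t) k)
        ≤ ∑ k ∈ Finset.univ \ P, x k := by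
      refine Finset.sum_le_sum fun k _ => ?_
      have := xhat_even_nonneg (A := A) (x := x) t k
      linarith
    have hcd : (0:ℝ) ≤ (c:ℝ)*d := by positivity
    nlinarith [mul_le_mul_of_nonneg_left (h3.trans hPe) hcd]
  -- main induction
  intro l
  induction l with
  | zero =>
      intro t _
      rw [show Uacc A P 0 = (∅ : Finset (Fin n)) from rfl, Finset.union_empty,
        pow_zero, one_mul]
      have := hUN0 t
      have := hOV0 t
      nlinarith
  | succ l ih =>
      intro t hlt
      obtain ⟨t', rfl⟩ : ∃ t', t = t' + 1 := ⟨t - 1, by omega⟩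
      have hlt' : l ≤ t' := by omega
      set S0 : Finset (Fin n) := Finset.univ \ Sprime A P with hS0
      set U : Finset (Fin n) := Uacc A P l with hU
      set S : Finset (Fin n) := nextS A P U with hS
      have hWeq : S0 ∪ Uacc A P (l+1) = (S0 ∪ U) ∪ S := by
        rw [show Uacc A P (l+1) = U ∪ S from rfl, Finset.union_assoc]
      have hdisj : Disjoint (S0 ∪ U) S := by
        rw [Finset.disjoint_left]
        intro i hiW hiS
        obtain ⟨hiSp, hex⟩ := mem_nextS.mp hiS
        obtain ⟨j, _, hj⟩ := hex
        have h1 : i ∈ nhdY A j ∩ (Sprime A P \ U) := by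
          rw [hj]; exact Finset.mem_singleton_self i
        have hiU : i ∉ U := (Finset.mem_sdiff.mp (Finset.mem_inter.mp h1).2).2
        rcases Finset.mem_union.mp hiW with h | h
        · exact (Finset.mem_sdiff.mp h).2 hiSp
        · exact hiU h
      obtain ⟨J, hJmem, hE, hcount⟩ := nextS_count hm hcc P U
      -- UN bound for S at time t'+1
      have hUNS : ∑ i ∈ S, (x i - xhat A x (2*(t'+1)) i)
          ≤ (c:ℝ) * ∑ k ∈ S0 ∪ U, (xhat A x (2*t'+1) k - x k) := by
        have h1 : ∑ i ∈ S, (x i - xhat A x (2*(t'+1)) i)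
            ≤ ∑ i ∈ S, ∑ k ∈ (nhdY A (J i)).erase i, (xhat A x (2*t'+1) k - x k) := by
          refine Finset.sum_le_sum fun i hi => ?_
          rw [show 2*(t'+1) = 2*t'+2 from by ring]
          exact under_elem (hJmem i hi)
        exact h1.trans (hcount _ (fun k => sub_nonneg.mpr ((hsand t').2 k)))
      have hOVS : ∑ i ∈ S, (xhat A x (2*(t'+1)+1) i - x i)
          ≤ (c:ℝ) * ∑ k ∈ S0 ∪ U, (x k - xhat A x (2*(t'+1)) k) := by
        have h1 : ∑ i ∈ S, (xhat A x (2*(t'+1)+1) i - x i)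
            ≤ ∑ i ∈ S, ∑ k ∈ (nhdY A (J i)).erase i, (x k - xhat A x (2*(t'+1)) k) :=
          Finset.sum_le_sum fun i hi => over_elem (hJmem i hi)
        exact h1.trans (hcount _ (fun k => sub_nonneg.mpr ((hsand (t'+1)).1 k)))
      -- inductive bounds
      have ih1 := ih t' hlt'
      have ih2 := ih (t'+1) (by omega)
      set K : ℝ := (1 + 2*(c:ℝ))^l * (1 + (c:ℝ)*(d:ℝ)) * e with hK
      have hKn : 0 ≤ K := by positivity
      have hOVW : ∑ k ∈ S0 ∪ U, (xhat A x (2*t'+1) k - x k) ≤ K := by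
        have := hUNn (S0 ∪ U) t'
        linarith
      have hUNW : ∑ k ∈ S0 ∪ U, (x k - xhat A x (2*(t'+1)) k) ≤ K := by
        have := hOVn (S0 ∪ U) (t'+1)
        linarith
      have hc0 : (0:ℝ) ≤ (c:ℝ) := by positivity
      have hUNS' : ∑ i ∈ S, (x i - xhat A x (2*(t'+1)) i) ≤ (c:ℝ) * K :=
        hUNS.trans (mul_le_mul_of_nonneg_left hOVW hc0)
      have hOVS' : ∑ i ∈ S, (xhat A x (2*(t'+1)+1) i - x i) ≤ (c:ℝ) * K :=
        hOVS.trans (mul_le_mul_of_nonneg_left hUNW hc0)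
      rw [hWeq, Finset.sum_union hdisj, Finset.sum_union hdisj]
      have hrhs : (1 + 2*(c:ℝ))^(l+1) * (1 + (c:ℝ)*(d:ℝ)) * e = K + 2*(c:ℝ)*K := by
        rw [hK, pow_succ]; ring
      rw [hrhs]
      linarith

lemma xhat_eq_of_d_one (hx : ∀ i, 0 ≤ x i) {c : ℕ} (hc : 0 < c)
    (hcc : ∀ i, (nhdX A i).card = c) (hdd : ∀ j, (nhdY A j).card = 1) :
    ∀ (s : ℕ) (i : Fin n), xhat A x (s+1) i = x i := by
  have hne : ∀ i, (nhdX A i).Nonempty := fun i =>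
    Finset.card_pos.mp (by rw [hcc i]; exact hc)
  have key : ∀ (z : Fin n → ℝ) (i : Fin n) (j : Fin m), j ∈ nhdX A i →
      msgY A x z j i = x i := by
    intro z i j hj
    have hiY : i ∈ nhdY A j := mem_nhdY.mpr (mem_nhdX.mp hj)
    have hsing : nhdY A j = {i} := by
      obtain ⟨a, ha⟩ := Finset.card_eq_one.mp (hdd j)
      rw [ha] at hiY ⊢
      rw [Finset.mem_singleton.mp hiY]
    unfold msgY yvec
    rw [hsing]
    simp
  intro s i
  have himg : (fun l => msgY A x (xhat A x s) l i) '' (↑(nhdX A i) : Set (Fin m))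
      = {x i} := by
    apply Set.eq_singleton_iff_nonempty_unique_mem.mpr
    refine ⟨(hne i).to_set.image _, ?_⟩
    rintro b ⟨j, hj, rfl⟩
    exact key _ i j (Finset.mem_coe.mp hj)
  rw [xhat]
  simp only [himg]
  split_ifs with h
  · rw [csSup_singleton]; exact max_eq_right (hx i)
  · exact csInf_singleton _

end MPAux

open MPAux in
/-- **Level-set error bound.** For the level sets `S_ℓ` built from `X₊ = supp x⁽ᵏ⁾`,
`∑_{i ∈ S_ℓ} (x_i - x̂_i^{2ℓ}) ≤ (cd)^{2ℓ}·‖x - x⁽ᵏ⁾‖₁` for every `ℓ ≥ 0`. -/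
theorem level_set_error_bound (n m c d k : ℕ)
    (hn : 0 < n) (hm : 0 < m) (hc : 0 < c) (hd : 0 < d) (hk : 0 < k)
    (A : Fin m → Fin n → Bool) (ε : ℝ) (hε : 0 < ε)
    (hreg : IsRegular A c d)
    (hexp : IsExpander A c (Nat.floor (2 * (k : ℝ) / (1 + 2 * ε) + 1)) (1 / 2 + ε))
    (x xk : Fin n → ℝ) (hx : ∀ i, 0 ≤ x i) (hbest : BestKSparse k x xk) :
    ∀ l : ℕ,
      ∑ i ∈ Slevel A (Finset.univ.filter (fun i => xk i ≠ 0)) l,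
          (x i - xhat A x (2 * l) i) ≤
        ((c : ℝ) * d) ^ (2 * l) * l1 (fun i => x i - xk i) := by
  classical
  obtain ⟨hcc, hdd⟩ := hreg
  set P : Finset (Fin n) := Finset.univ.filter (fun i => xk i ≠ 0) with hPdef
  have he : (0:ℝ) ≤ l1 (fun i => x i - xk i) :=
    Finset.sum_nonneg fun i _ => abs_nonneg _
  have hPe : ∑ i ∈ Finset.univ \ P, x i ≤ l1 (fun i => x i - xk i) := by
    have h1 : ∀ i ∈ Finset.univ \ P, x i = |x i - xk i| := by
      intro i hi
      have h2 : xk i = 0 := by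
        have := (Finset.mem_sdiff.mp hi).2
        simpa [hPdef] using this
      rw [h2, sub_zero, abs_of_nonneg (hx i)]
    rw [Finset.sum_congr rfl h1]
    exact Finset.sum_le_sum_of_subset_of_nonneg Finset.sdiff_subset
      (fun i _ _ => abs_nonneg _)
  have hne : ∀ i, (nhdX A i).Nonempty := fun i =>
    Finset.card_pos.mp (by rw [hcc i]; exact hc)
  have hsand := sandwich hx hne
  intro l
  cases l with
  | zero =>
      simp only [Nat.mul_zero, pow_zero, one_mul]
      have hcal : ∑ i ∈ Slevel A P 0, (x i - xhat A x 0 i)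
          = ∑ i ∈ (Finset.univ \ Sprime A P : Finset (Fin n)), x i := by
        rw [show Slevel A P 0 = Finset.univ \ Sprime A P from rfl]
        refine Finset.sum_congr rfl fun i _ => ?_
        rw [show xhat A x 0 i = 0 from rfl]
        ring
      rw [hcal]
      exact le_trans (Finset.sum_le_sum_of_subset_of_nonneg (S0_subset P)
        (fun i _ _ => hx i)) hPe
  | succ L =>
      rcases Nat.lt_or_ge d 2 with hd1 | hd2
      · -- degenerate case d = 1
        have hd1' : d = 1 := by omega
        subst hd1'
        have hz : ∑ i ∈ Slevel A P (L+1), (x i - xhat A x (2*(L+1)) i) = 0 := by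
          refine Finset.sum_eq_zero fun i _ => ?_
          rw [show 2*(L+1) = (2*L+1)+1 from by ring,
            xhat_eq_of_d_one hx hc hcc hdd (2*L+1) i]
          ring
        rw [hz]
        exact mul_nonneg (by positivity) he
      · -- main case d ≥ 2
        have hQ := Qlemma (A := A) (x := x) hm hc hcc hdd hx P he hPe L L le_rfl
        obtain ⟨J, hJmem, hE, hcount⟩ := nextS_count (A := A) hm hcc P (Uacc A P L)
        have h1 : ∑ i ∈ Slevel A P (L+1), (x i - xhat A x (2*(L+1)) i)
            ≤ (c:ℝ) * ∑ i ∈ (Finset.univ \ Sprime A P) ∪ Uacc A P L,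
                (xhat A x (2*L+1) i - x i) := by
          rw [show Slevel A P (L+1) = nextS A P (Uacc A P L) from rfl]
          have h2 : ∑ i ∈ nextS A P (Uacc A P L), (x i - xhat A x (2*(L+1)) i)
              ≤ ∑ i ∈ nextS A P (Uacc A P L),
                  ∑ j ∈ (nhdY A (J i)).erase i, (xhat A x (2*L+1) j - x j) := by
            refine Finset.sum_le_sum fun i hi => ?_
            rw [show 2*(L+1) = 2*L+2 from by ring]
            exact under_elem (hJmem i hi)
          exact h2.trans (hcount _ (fun j => sub_nonneg.mpr ((hsand L).2 j)))
        have hUNn : 0 ≤ ∑ i ∈ (Finset.univ \ Sprime A P) ∪ Uacc A P L,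
            (x i - xhat A x (2*L) i) :=
          Finset.sum_nonneg fun i _ => sub_nonneg.mpr ((hsand L).1 i)
        have hOVW : ∑ i ∈ (Finset.univ \ Sprime A P) ∪ Uacc A P L,
            (xhat A x (2*L+1) i - x i)
            ≤ (1 + 2*(c:ℝ))^L * (1 + (c:ℝ)*(d:ℝ)) * l1 (fun i => x i - xk i) := by
          linarith
        have hc0 : (0:ℝ) ≤ (c:ℝ) := by positivity
        have hfin := h1.trans (mul_le_mul_of_nonneg_left hOVW hc0)
        refine hfin.trans ?_
        -- numeric coefficient comparison
        have hc1 : (1:ℝ) ≤ (c:ℝ) := by exact_mod_cast hc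
        have hd2' : (2:ℝ) ≤ (d:ℝ) := by exact_mod_cast hd2
        have e1 : (4:ℝ) ≤ (d:ℝ)^2 := by nlinarith
        have e2 : (c:ℝ)^2 * 4 ≤ (c:ℝ)^2 * (d:ℝ)^2 :=
          mul_le_mul_of_nonneg_left e1 (sq_nonneg (c:ℝ))
        have hb1 : (1 + 2*(c:ℝ)) ≤ ((c:ℝ)*(d:ℝ))^2 := by nlinarith [sq_nonneg ((c:ℝ)-1)]
        have e3 : (c:ℝ)^2 * (d:ℝ) * 1 ≤ (c:ℝ)^2 * (d:ℝ) * ((d:ℝ)-1) := by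
          have : (1:ℝ) ≤ (d:ℝ) - 1 := by linarith
          have hnn : (0:ℝ) ≤ (c:ℝ)^2 * (d:ℝ) := by positivity
          exact mul_le_mul_of_nonneg_left this hnn
        have e4 : (c:ℝ) ≤ (c:ℝ)^2 * (d:ℝ) := by nlinarith [sq_nonneg ((c:ℝ)-1)]
        have hb2 : (c:ℝ) * (1 + (c:ℝ)*(d:ℝ)) ≤ ((c:ℝ)*(d:ℝ))^2 := by nlinarith
        have hpowL : (1 + 2*(c:ℝ))^L ≤ (((c:ℝ)*(d:ℝ))^2)^L :=
          pow_le_pow_left₀ (by positivity) hb1 L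
        have hcoef : (c:ℝ) * ((1 + 2*(c:ℝ))^L * (1 + (c:ℝ)*(d:ℝ)))
            ≤ ((c:ℝ)*(d:ℝ))^(2*(L+1)) := by
          calc (c:ℝ) * ((1 + 2*(c:ℝ))^L * (1 + (c:ℝ)*(d:ℝ)))
              = ((c:ℝ) * (1 + (c:ℝ)*(d:ℝ))) * (1 + 2*(c:ℝ))^L := by ring
            _ ≤ (((c:ℝ)*(d:ℝ))^2) * (((c:ℝ)*(d:ℝ))^2)^L :=
                mul_le_mul hb2 hpowL (by positivity) (by positivity)
            _ = ((c:ℝ)*(d:ℝ))^(2*(L+1)) := by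
                rw [pow_mul, pow_succ]; ring
        calc (c:ℝ) * ((1 + 2*(c:ℝ))^L * (1 + (c:ℝ)*(d:ℝ)) * l1 (fun i => x i - xk i))
            = ((c:ℝ) * ((1 + 2*(c:ℝ))^L * (1 + (c:ℝ)*(d:ℝ)))) * l1 (fun i => x i - xk i) := by
              ring
          _ ≤ ((c:ℝ)*(d:ℝ))^(2*(L+1)) * l1 (fun i => x i - xk i) :=
              mul_le_mul_of_nonneg_right hcoef he
end

section
/- Persistence of exact recovery. Suppose every i ∈ X has degree c ≥ 1 and every j ∈ Y has degree d ≥ 1, let x ∈ ℝ₊ⁿ and run the message-passing algorithm on y = Ax. If for some t ≥ 0 the estimate satisfies x̂_i^{2t} = x_i for all i ∈ X, then x̂_i^{s} = x_i for all i ∈ X and all s ≥ 2t. -/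
open Finset

open MP Finset

/-! The signal `x` is a fixed point of the message-passing iteration: once every variable
message equals `x`, each check message `y_j - ∑_{k ≠ i} x_k` equals `x_i`, so both the minimum
and, since `x ≥ 0`, the clipped maximum over the (nonempty) neighborhood return `x_i` again. -/

namespace MP

variable {n m : ℕ} (A : Fin m → Fin n → Bool) (x : Fin n → ℝ)

theorem msgY_self_of_adj {j : Fin m} {i : Fin n} (hji : A j i = true) :
    msgY A x x j i = x i := by
  have hi : i ∈ nhdY A j := Finset.mem_filter.2 ⟨Finset.mem_univ i, hji⟩
  rw [msgY, yvec, ← Finset.add_sum_erase _ _ hi, add_sub_cancel_right]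

theorem image_msgY_self {i : Fin n} (hi : (nhdX A i).Nonempty) :
    (fun l => msgY A x x l i) '' (↑(nhdX A i) : Set (Fin m)) = {x i} := by
  have hconst : Set.EqOn (fun l => msgY A x x l i) (fun _ => x i) ↑(nhdX A i) :=
    fun l hl => msgY_self_of_adj A x (Finset.mem_filter.1 hl).2
  rw [hconst.image_eq, (Finset.coe_nonempty.2 hi).image_const]

theorem xhat_succ_eq_of_xhat_eq {s : ℕ} {i : Fin n} (hs : xhat A x s = x)
    (hi : (nhdX A i).Nonempty) (hxi : 0 ≤ x i) : xhat A x (s + 1) i = x i := by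
  rw [xhat, hs]
  beta_reduce
  rw [image_msgY_self A x hi]
  split_ifs
  · rw [csSup_singleton, max_eq_right hxi]
  · rw [csInf_singleton]

end MP

theorem persistence_of_exact_recovery_general (n m c d : ℕ)
    (hc : 1 ≤ c)
    (A : Fin m → Fin n → Bool) (hreg : IsRegular A c d)
    (x : Fin n → ℝ) (hx : ∀ i, 0 ≤ x i)
    (t : ℕ) (hexact : ∀ i : Fin n, xhat A x (2 * t) i = x i) :
    ∀ s : ℕ, 2 * t ≤ s → ∀ i : Fin n, xhat A x s i = x i := by
  have hnhd : ∀ i, (nhdX A i).Nonempty := fun i =>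
    Finset.card_pos.1 (by rw [hreg.1 i]; omega)
  intro s hs
  induction s, hs using Nat.le_induction with
  | base => exact hexact
  | succ s _ ih => exact fun i => xhat_succ_eq_of_xhat_eq A x (funext ih) (hnhd i) (hx i)

/-- **Persistence of exact recovery.** If the estimate is exact at some even time `2t`,
it stays exact at all later times. -/
theorem persistence_of_exact_recovery (n m c d : ℕ)
    (hn : 0 < n) (hm : 0 < m) (hc : 1 ≤ c) (hd : 1 ≤ d)
    (A : Fin m → Fin n → Bool) (hreg : IsRegular A c d)
    (x : Fin n → ℝ) (hx : ∀ i, 0 ≤ x i)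
    (t : ℕ) (hexact : ∀ i : Fin n, xhat A x (2 * t) i = x i) :
    ∀ s : ℕ, 2 * t ≤ s → ∀ i : Fin n, xhat A x s i = x i :=
  persistence_of_exact_recovery_general n m c d hc A hreg x hx t hexact
end
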